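/- arXiv:2412.17850 — 2 statements merged into one kernel-verified Lean document; each statement's English description precedes it below -/
import Mathlib

section
/- Let A = P^h Q^k R^l in 𝔽₄[x] be bi-unitary perfect, where P, Q, R are distinct monic irreducible polynomials with deg P ≤ deg Q ≤ deg R and h, k, l are positive integers. Then ω(σ**(P^h)) ≤ 2, ω(σ**(Q^k)) ≤ 2 and ω(σ**(R^l)) ≤ 2. Moreover, if h is even then h = 2, and if h is odd then h = 2^r − 1 for some positive integer r. -/
open Polynomial
open scoped Classical

noncomputable section

/-- The field with four elements. -/
abbrev F4 : Type := GaloisField 2 2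

/-- `D` is a unitary divisor of `S`: `D ∣ S` and `gcd(D, S / D) = 1`. -/
def IsUnitaryDivisor (D S : F4[X]) : Prop :=
  D ∣ S ∧ IsCoprime D (S / D)

/-- The greatest common unitary divisor of `S` and `T`: a monic common unitary
divisor of `S` and `T` of maximal degree. -/
noncomputable def gcdU (S T : F4[X]) : F4[X] :=
  if h : ∃ D : F4[X], D.Monic ∧ IsUnitaryDivisor D S ∧ IsUnitaryDivisor D T ∧
      ∀ E : F4[X], E.Monic → IsUnitaryDivisor E S → IsUnitaryDivisor E T →
        E.degree ≤ D.degree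
  then h.choose else 0

/-- `D` is a bi-unitary divisor of `S`: `D ∣ S` and `gcd_u(D, S / D) = 1`. -/
def IsBiunitaryDivisor (D S : F4[X]) : Prop :=
  D ∣ S ∧ gcdU D (S / D) = 1

/-- `σ(S)`: the sum of all monic divisors of `S`. -/
noncomputable def sigma' (S : F4[X]) : F4[X] :=
  ∑ᶠ D ∈ {D : F4[X] | D.Monic ∧ D ∣ S}, D

/-- `σ**(S)`: the sum of all monic bi-unitary divisors of `S`. -/
noncomputable def sigmaBU (S : F4[X]) : F4[X] :=
  ∑ᶠ D ∈ {D : F4[X] | D.Monic ∧ IsBiunitaryDivisor D S}, D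

/-- `S` is perfect if `σ(S) = S`. -/
def IsPerfect (S : F4[X]) : Prop := sigma' S = S

/-- `S` is bi-unitary perfect if `σ**(S) = S`. -/
def IsBUPerfect (S : F4[X]) : Prop := sigmaBU S = S

/-- `ω(S)`: the number of distinct monic irreducible factors of `S`. -/
noncomputable def omegaCount (S : F4[X]) : ℕ :=
  Set.ncard {P : F4[X] | P.Monic ∧ Irreducible P ∧ P ∣ S}

/-- `Ω₁`: `P` and `P + 1` are both irreducible. -/
def Omega1 (P : F4[X]) : Prop :=
  Irreducible P ∧ Irreducible (P + 1)

/-- `Ω₂`: `P`, `P + 1`, `P³ + P + 1` and `P³ + P² + 1` are all irreducible. -/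
def Omega2 (P : F4[X]) : Prop :=
  Irreducible P ∧ Irreducible (P + 1) ∧
    Irreducible (P ^ 3 + P + 1) ∧ Irreducible (P ^ 3 + P ^ 2 + 1)

/-- A bi-unitary perfect polynomial is indecomposable if it has no proper
(monic, nontrivial) divisor which is bi-unitary perfect. -/
def IsIndecomposable (A : F4[X]) : Prop :=
  ¬ ∃ D : F4[X], D.Monic ∧ D ∣ A ∧ D ≠ 1 ∧ D ≠ A ∧ IsBUPerfect D

lemma isUnitaryDivisor_one (S : F4[X]) : IsUnitaryDivisor 1 S :=
  ⟨one_dvd _, isCoprime_one_left⟩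

lemma gcdU_eq_one {S T : F4[X]}
    (H : ∀ E : F4[X], E.Monic → IsUnitaryDivisor E S → IsUnitaryDivisor E T → E = 1) :
    gcdU S T = 1 := by
  have hex : ∃ D : F4[X], D.Monic ∧ IsUnitaryDivisor D S ∧ IsUnitaryDivisor D T ∧
      ∀ E : F4[X], E.Monic → IsUnitaryDivisor E S → IsUnitaryDivisor E T →
        E.degree ≤ D.degree := by
    refine ⟨1, monic_one, isUnitaryDivisor_one S, isUnitaryDivisor_one T, ?_⟩
    intro E hm h1 h2
    rw [H E hm h1 h2]
  rw [gcdU, dif_pos hex]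
  obtain ⟨hm, h1, h2, _⟩ := hex.choose_spec
  exact H _ hm h1 h2

lemma gcdU_ne_one {S T E : F4[X]} (hm : E.Monic) (hE : 0 < E.natDegree)
    (h1 : IsUnitaryDivisor E S) (h2 : IsUnitaryDivisor E T) : gcdU S T ≠ 1 := by
  intro heq
  rw [gcdU] at heq
  by_cases hex : ∃ D : F4[X], D.Monic ∧ IsUnitaryDivisor D S ∧ IsUnitaryDivisor D T ∧
      ∀ E : F4[X], E.Monic → IsUnitaryDivisor E S → IsUnitaryDivisor E T →
        E.degree ≤ D.degree
  · rw [dif_pos hex] at heq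
    obtain ⟨_, _, _, hmax⟩ := hex.choose_spec
    have := hmax E hm h1 h2
    rw [heq, degree_one] at this
    have h0 : (0 : WithBot ℕ) < E.degree := natDegree_pos_iff_degree_pos.mp hE
    exact absurd this (not_le.mpr h0)
  · rw [dif_neg hex] at heq
    exact zero_ne_one heq

lemma ud_of_eq_mul {E S W : F4[X]} (hE : E ≠ 0) (hco : IsCoprime E W) (hS : S = E * W) :
    IsUnitaryDivisor E S := by
  refine ⟨⟨W, hS⟩, ?_⟩
  rw [hS, mul_div_cancel_left₀ _ hE]
  exact hco

section PrimePow
variable {P Q R : F4[X]}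

lemma mipow_inj (hPi : Irreducible P) {i j : ℕ} (hij : P ^ i = P ^ j) : i = j := by
  have := congrArg natDegree hij
  rw [natDegree_pow, natDegree_pow] at this
  exact Nat.eq_of_mul_eq_mul_right hPi.natDegree_pos this

lemma eq_pow_of_dvd (hPm : P.Monic) (hPi : Irreducible P) {D : F4[X]} {e : ℕ}
    (hDm : D.Monic) (hD : D ∣ P ^ e) : ∃ i ≤ e, D = P ^ i := by
  obtain ⟨i, hie, hassoc⟩ := (dvd_prime_pow hPi.prime e).mp hD
  exact ⟨i, hie, eq_of_monic_of_associated hDm (hPm.pow i) hassoc⟩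

lemma mi_not_dvd (hPm : P.Monic) (hPi : Irreducible P) (hQm : Q.Monic) (hQi : Irreducible Q)
    (hPQ : P ≠ Q) : ¬ P ∣ Q := by
  intro hdvd
  exact hPQ (eq_of_monic_of_associated hPm hQm (hPi.associated_of_dvd hQi hdvd))

lemma mi_coprime (hPm : P.Monic) (hPi : Irreducible P) (hQm : Q.Monic) (hQi : Irreducible Q)
    (hPQ : P ≠ Q) : IsCoprime P Q :=
  hPi.coprime_iff_not_dvd.mpr (mi_not_dvd hPm hPi hQm hQi hPQ)

lemma mi_not_dvd_mul_pow (hPm : P.Monic) (hPi : Irreducible P) (hQm : Q.Monic)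
    (hQi : Irreducible Q) (hRm : R.Monic) (hRi : Irreducible R) (hPQ : P ≠ Q) (hPR : P ≠ R)
    {b c : ℕ} : ¬ P ∣ Q ^ b * R ^ c := by
  intro hdvd
  rcases hPi.prime.dvd_mul.mp hdvd with hd | hd
  · exact mi_not_dvd hPm hPi hQm hQi hPQ (hPi.prime.dvd_of_dvd_pow hd)
  · exact mi_not_dvd hPm hPi hRm hRi hPR (hPi.prime.dvd_of_dvd_pow hd)

lemma mipow_mul_inj (hPm : P.Monic) {U V : F4[X]} (hU : ¬ P ∣ U) (hV : ¬ P ∣ V) :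
    ∀ {i i' : ℕ}, P ^ i * U = P ^ i' * V → i = i' ∧ U = V := by
  intro i
  induction i with
  | zero =>
    intro i' he
    cases i' with
    | zero => simpa using he
    | succ a =>
      exfalso
      apply hU
      rw [pow_zero, one_mul] at he
      exact ⟨P ^ a * V, by rw [he, pow_succ]; ring⟩
  | succ a ih =>
    intro i' he
    cases i' with
    | zero =>
      exfalso
      apply hV
      rw [pow_zero, one_mul] at he
      exact ⟨P ^ a * U, by rw [← he, pow_succ]; ring⟩
    | succ b =>
      have he' : P * (P ^ a * U) = P * (P ^ b * V) := by
        rw [← mul_assoc, ← mul_assoc, ← pow_succ']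
        conv_rhs => rw [← pow_succ']
        exact he
      obtain ⟨h1, h2⟩ := ih (mul_left_cancel₀ hPm.ne_zero he')
      exact ⟨by omega, h2⟩

end PrimePow

section Triple
variable {P Q R : F4[X]}

lemma mipow_coprime (hPm : P.Monic) (hPi : Irreducible P) (hQm : Q.Monic) (hQi : Irreducible Q)
    (hPQ : P ≠ Q) (a b : ℕ) : IsCoprime (P ^ a) (Q ^ b) :=
  (mi_coprime hPm hPi hQm hQi hPQ).pow

lemma coprime_P_QR (hPm : P.Monic) (hPi : Irreducible P) (hQm : Q.Monic) (hQi : Irreducible Q)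
    (hRm : R.Monic) (hRi : Irreducible R) (hPQ : P ≠ Q) (hPR : P ≠ R) (a b c : ℕ) :
    IsCoprime (P ^ a) (Q ^ b * R ^ c) :=
  IsCoprime.mul_right (mipow_coprime hPm hPi hQm hQi hPQ a b)
    (mipow_coprime hPm hPi hRm hRi hPR a c)

lemma dvd_triple_decomp (hPm : P.Monic) (hPi : Irreducible P) (hQm : Q.Monic)
    (hQi : Irreducible Q) (hRm : R.Monic) (hRi : Irreducible R)
    {i j m : ℕ} {E : F4[X]} (hEm : E.Monic) (hE : E ∣ P ^ i * Q ^ j * R ^ m) :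
    ∃ a b c, a ≤ i ∧ b ≤ j ∧ c ≤ m ∧ E = P ^ a * Q ^ b * R ^ c := by
  rw [mul_assoc] at hE
  obtain ⟨E1, W, hE1, hW, hEe⟩ := exists_dvd_and_dvd_of_dvd_mul hE
  obtain ⟨E2, E3, hE2, hE3, hWe⟩ := exists_dvd_and_dvd_of_dvd_mul hW
  obtain ⟨a, ha, hassoc1⟩ := (dvd_prime_pow hPi.prime i).mp hE1
  obtain ⟨b, hb, hassoc2⟩ := (dvd_prime_pow hQi.prime j).mp hE2
  obtain ⟨c, hc, hassoc3⟩ := (dvd_prime_pow hRi.prime m).mp hE3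
  refine ⟨a, b, c, ha, hb, hc, ?_⟩
  have hassoc : Associated E (P ^ a * (Q ^ b * R ^ c)) := by
    rw [hEe, hWe]
    exact Associated.mul_mul hassoc1 (Associated.mul_mul hassoc2 hassoc3)
  have hmon : (P ^ a * (Q ^ b * R ^ c)).Monic :=
    (hPm.pow a).mul ((hQm.pow b).mul (hRm.pow c))
  rw [eq_of_monic_of_associated hEm hmon hassoc, mul_assoc]

lemma triple_inj (hPm : P.Monic) (hPi : Irreducible P) (hQm : Q.Monic)
    (hQi : Irreducible Q) (hRm : R.Monic) (hRi : Irreducible R)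
    (hPQ : P ≠ Q) (hPR : P ≠ R) (hQR : Q ≠ R)
    {a b c a' b' c' : ℕ} (he : P ^ a * Q ^ b * R ^ c = P ^ a' * Q ^ b' * R ^ c') :
    a = a' ∧ b = b' ∧ c = c' := by
  rw [mul_assoc, mul_assoc] at he
  obtain ⟨h1, he2⟩ := mipow_mul_inj hPm
    (mi_not_dvd_mul_pow hPm hPi hQm hQi hRm hRi hPQ hPR)
    (mi_not_dvd_mul_pow hPm hPi hQm hQi hRm hRi hPQ hPR) he
  have hQR3 : ¬ Q ∣ R ^ c := fun hd =>
    mi_not_dvd hQm hQi hRm hRi hQR (hQi.prime.dvd_of_dvd_pow hd)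
  have hQR3' : ¬ Q ∣ R ^ c' := fun hd =>
    mi_not_dvd hQm hQi hRm hRi hQR (hQi.prime.dvd_of_dvd_pow hd)
  obtain ⟨h2, he3⟩ := mipow_mul_inj hQm hQR3 hQR3' he2
  exact ⟨h1, h2, mipow_inj hRi he3⟩

end Triple

section UD
variable {P Q R : F4[X]}

lemma coprime_self_powers (hPi : Irreducible P) {a b : ℕ} (hco : IsCoprime (P ^ a) (P ^ b)) :
    a = 0 ∨ b = 0 := by
  by_contra hcon
  push_neg at hcon
  exact hPi.not_isUnit (hco.isUnit_of_dvd' (dvd_pow_self P hcon.1) (dvd_pow_self P hcon.2))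

lemma ud_pow_cases (hPm : P.Monic) (hPi : Irreducible P) {a e : ℕ}
    (hud : IsUnitaryDivisor (P ^ a) (P ^ e)) : a = 0 ∨ a = e := by
  have hae : a ≤ e := by
    have h1 := Polynomial.natDegree_le_of_dvd hud.1 (hPm.pow e).ne_zero
    rw [natDegree_pow, natDegree_pow] at h1
    exact Nat.le_of_mul_le_mul_right h1 hPi.natDegree_pos
  have hdiv : (P : F4[X]) ^ e / P ^ a = P ^ (e - a) := by
    rw [← pow_mul_pow_sub P hae, mul_div_cancel_left₀ _ (hPm.pow a).ne_zero]
  have hco := hud.2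
  rw [hdiv] at hco
  rcases coprime_self_powers hPi hco with h | h
  · exact Or.inl h
  · exact Or.inr (by omega)

lemma bu_pp_iff (hPm : P.Monic) (hPi : Irreducible P) {i e : ℕ} (hie : i ≤ e) :
    IsBiunitaryDivisor (P ^ i) (P ^ e) ↔ ¬(2 * i = e ∧ 0 < i) := by
  have hdiv : (P : F4[X]) ^ e / P ^ i = P ^ (e - i) := by
    rw [← pow_mul_pow_sub P hie, mul_div_cancel_left₀ _ (hPm.pow i).ne_zero]
  constructor
  · rintro ⟨hdvd, hgcd⟩ ⟨h2i, hi0⟩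
    rw [hdiv] at hgcd
    have hei : e - i = i := by omega
    rw [hei] at hgcd
    have hud : IsUnitaryDivisor (P ^ i) (P ^ i) :=
      ud_of_eq_mul (hPm.pow i).ne_zero isCoprime_one_right (by rw [mul_one])
    refine gcdU_ne_one (hPm.pow i) ?_ hud hud hgcd
    rw [natDegree_pow]
    exact Nat.mul_pos hi0 hPi.natDegree_pos
  · intro hcond
    refine ⟨pow_dvd_pow P hie, ?_⟩
    rw [hdiv]
    apply gcdU_eq_one
    intro E hEm h1 h2
    obtain ⟨a, hai, rfl⟩ := eq_pow_of_dvd hPm hPi hEm h1.1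
    by_cases ha0 : a = 0
    · rw [ha0, pow_zero]
    · exfalso
      have h := (ud_pow_cases hPm hPi h1).resolve_left ha0
      have h' := (ud_pow_cases hPm hPi h2).resolve_left ha0
      exact hcond ⟨by omega, by omega⟩

lemma div_triple (hPm : P.Monic) (hQm : Q.Monic) (hRm : R.Monic)
    {i j m h k l : ℕ} (hih : i ≤ h) (hjk : j ≤ k) (hml : m ≤ l) :
    (P ^ h * Q ^ k * R ^ l) / (P ^ i * Q ^ j * R ^ m)
      = P ^ (h - i) * Q ^ (k - j) * R ^ (l - m) := by
  have hD : (P ^ i * Q ^ j * R ^ m) ≠ 0 :=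
    (((hPm.pow i).mul (hQm.pow j)).mul (hRm.pow m)).ne_zero
  have key : (P ^ i * Q ^ j * R ^ m) * (P ^ (h - i) * Q ^ (k - j) * R ^ (l - m))
      = P ^ h * Q ^ k * R ^ l := by
    rw [show (P ^ i * Q ^ j * R ^ m) * (P ^ (h - i) * Q ^ (k - j) * R ^ (l - m))
        = (P ^ i * P ^ (h - i)) * (Q ^ j * Q ^ (k - j)) * (R ^ m * R ^ (l - m)) by ring,
      pow_mul_pow_sub P hih, pow_mul_pow_sub Q hjk, pow_mul_pow_sub R hml]
  rw [← key, mul_div_cancel_left₀ _ hD]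

end UD

section BUTriple
variable {P Q R : F4[X]}

lemma ud_triple_cases (hPm : P.Monic) (hPi : Irreducible P) (hQm : Q.Monic)
    (hQi : Irreducible Q) (hRm : R.Monic) (hRi : Irreducible R)
    {a b c i j m : ℕ} (hai : a ≤ i) (hbj : b ≤ j) (hcm : c ≤ m)
    (hud : IsUnitaryDivisor (P ^ a * Q ^ b * R ^ c) (P ^ i * Q ^ j * R ^ m)) :
    (a = 0 ∨ a = i) ∧ (b = 0 ∨ b = j) ∧ (c = 0 ∨ c = m) := by
  have hco := hud.2
  rw [div_triple hPm hQm hRm hai hbj hcm] at hco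
  refine ⟨?_, ?_, ?_⟩
  · by_contra hcon
    push_neg at hcon
    refine hPi.not_isUnit (hco.isUnit_of_dvd' ?_ ?_)
    · exact dvd_mul_of_dvd_left (dvd_mul_of_dvd_left (dvd_pow_self P hcon.1) _) _
    · exact dvd_mul_of_dvd_left (dvd_mul_of_dvd_left (dvd_pow_self P (by omega)) _) _
  · by_contra hcon
    push_neg at hcon
    refine hQi.not_isUnit (hco.isUnit_of_dvd' ?_ ?_)
    · exact dvd_mul_of_dvd_left (dvd_mul_of_dvd_right (dvd_pow_self Q hcon.1) _) _
    · exact dvd_mul_of_dvd_left (dvd_mul_of_dvd_right (dvd_pow_self Q (by omega)) _) _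
  · by_contra hcon
    push_neg at hcon
    refine hRi.not_isUnit (hco.isUnit_of_dvd' ?_ ?_)
    · exact dvd_mul_of_dvd_right (dvd_pow_self R hcon.1) _
    · exact dvd_mul_of_dvd_right (dvd_pow_self R (by omega)) _

lemma bu_triple_iff (hPm : P.Monic) (hPi : Irreducible P) (hQm : Q.Monic)
    (hQi : Irreducible Q) (hRm : R.Monic) (hRi : Irreducible R)
    (hPQ : P ≠ Q) (hPR : P ≠ R) (hQR : Q ≠ R)
    {h k l i j m : ℕ} (hih : i ≤ h) (hjk : j ≤ k) (hml : m ≤ l) :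
    IsBiunitaryDivisor (P ^ i * Q ^ j * R ^ m) (P ^ h * Q ^ k * R ^ l) ↔
      (¬(2 * i = h ∧ 0 < i) ∧ ¬(2 * j = k ∧ 0 < j) ∧ ¬(2 * m = l ∧ 0 < m)) := by
  have hDdvd : P ^ i * Q ^ j * R ^ m ∣ P ^ h * Q ^ k * R ^ l :=
    mul_dvd_mul (mul_dvd_mul (pow_dvd_pow P hih) (pow_dvd_pow Q hjk)) (pow_dvd_pow R hml)
  constructor
  · rintro ⟨-, hgcd⟩
    rw [div_triple hPm hQm hRm hih hjk hml] at hgcd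
    refine ⟨?_, ?_, ?_⟩
    · rintro ⟨h2i, hi0⟩
      have hud1 : IsUnitaryDivisor (P ^ i) (P ^ i * Q ^ j * R ^ m) :=
        ud_of_eq_mul (hPm.pow i).ne_zero
          (coprime_P_QR hPm hPi hQm hQi hRm hRi hPQ hPR i j m) (by ring)
      have hud2 : IsUnitaryDivisor (P ^ i) (P ^ (h - i) * Q ^ (k - j) * R ^ (l - m)) := by
        rw [show h - i = i by omega]
        exact ud_of_eq_mul (hPm.pow i).ne_zero
          (coprime_P_QR hPm hPi hQm hQi hRm hRi hPQ hPR i (k - j) (l - m)) (by ring)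
      refine gcdU_ne_one (hPm.pow i) ?_ hud1 hud2 hgcd
      rw [natDegree_pow]; exact Nat.mul_pos hi0 hPi.natDegree_pos
    · rintro ⟨h2j, hj0⟩
      have hud1 : IsUnitaryDivisor (Q ^ j) (P ^ i * Q ^ j * R ^ m) :=
        ud_of_eq_mul (hQm.pow j).ne_zero
          (coprime_P_QR hQm hQi hPm hPi hRm hRi (Ne.symm hPQ) hQR j i m) (by ring)
      have hud2 : IsUnitaryDivisor (Q ^ j) (P ^ (h - i) * Q ^ (k - j) * R ^ (l - m)) := by
        rw [show k - j = j by omega]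
        exact ud_of_eq_mul (hQm.pow j).ne_zero
          (coprime_P_QR hQm hQi hPm hPi hRm hRi (Ne.symm hPQ) hQR j (h - i) (l - m)) (by ring)
      refine gcdU_ne_one (hQm.pow j) ?_ hud1 hud2 hgcd
      rw [natDegree_pow]; exact Nat.mul_pos hj0 hQi.natDegree_pos
    · rintro ⟨h2m, hm0⟩
      have hud1 : IsUnitaryDivisor (R ^ m) (P ^ i * Q ^ j * R ^ m) :=
        ud_of_eq_mul (hRm.pow m).ne_zero
          (coprime_P_QR hRm hRi hPm hPi hQm hQi (Ne.symm hPR) (Ne.symm hQR) m i j) (by ring)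
      have hud2 : IsUnitaryDivisor (R ^ m) (P ^ (h - i) * Q ^ (k - j) * R ^ (l - m)) := by
        rw [show l - m = m by omega]
        exact ud_of_eq_mul (hRm.pow m).ne_zero
          (coprime_P_QR hRm hRi hPm hPi hQm hQi (Ne.symm hPR) (Ne.symm hQR) m (h - i) (k - j))
          (by ring)
      refine gcdU_ne_one (hRm.pow m) ?_ hud1 hud2 hgcd
      rw [natDegree_pow]; exact Nat.mul_pos hm0 hRi.natDegree_pos
  · rintro ⟨hc1, hc2, hc3⟩
    refine ⟨hDdvd, ?_⟩
    rw [div_triple hPm hQm hRm hih hjk hml]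
    apply gcdU_eq_one
    intro E hEm h1 h2
    obtain ⟨a, b, c, hai, hbj, hcm, rfl⟩ :=
      dvd_triple_decomp hPm hPi hQm hQi hRm hRi hEm h1.1
    obtain ⟨a', b', c', hai', hbj', hcm', hE'⟩ :=
      dvd_triple_decomp hPm hPi hQm hQi hRm hRi hEm h2.1
    obtain ⟨rfl, rfl, rfl⟩ := triple_inj hPm hPi hQm hQi hRm hRi hPQ hPR hQR hE'
    obtain ⟨hA1, hA2, hA3⟩ := ud_triple_cases hPm hPi hQm hQi hRm hRi hai hbj hcm h1
    obtain ⟨hB1, hB2, hB3⟩ := ud_triple_cases hPm hPi hQm hQi hRm hRi hai' hbj' hcm' h2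
    have ha0 : a = 0 := by
      rcases hA1 with h | h
      · exact h
      · rcases hB1 with h' | h'
        · exact h'
        · by_contra hne; exact hc1 ⟨by omega, by omega⟩
    have hb0 : b = 0 := by
      rcases hA2 with h | h
      · exact h
      · rcases hB2 with h' | h'
        · exact h'
        · by_contra hne; exact hc2 ⟨by omega, by omega⟩
    have hc0 : c = 0 := by
      rcases hA3 with h | h
      · exact h
      · rcases hB3 with h' | h'
        · exact h'
        · by_contra hne; exact hc3 ⟨by omega, by omega⟩
    rw [ha0, hb0, hc0]
    simp

end BUTriple

def buIdx (e : ℕ) : Finset ℕ := (Finset.range (e + 1)).filter (fun i => ¬(2 * i = e ∧ 0 < i))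

section SigmaBU
variable {P Q R : F4[X]}

lemma sigmaBU_prime_pow (hPm : P.Monic) (hPi : Irreducible P) (e : ℕ) :
    sigmaBU (P ^ e) = ∑ i ∈ buIdx e, P ^ i := by
  have hset : {D : F4[X] | D.Monic ∧ IsBiunitaryDivisor D (P ^ e)}
      = ↑((buIdx e).image (fun i => P ^ i)) := by
    ext D
    simp only [Finset.coe_image, Set.mem_image, Finset.mem_coe, buIdx, Finset.mem_filter,
      Finset.mem_range, Set.mem_setOf_eq]
    constructor
    · rintro ⟨hDm, hbu⟩
      obtain ⟨i, hie, rfl⟩ := eq_pow_of_dvd hPm hPi hDm hbu.1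
      exact ⟨i, ⟨by omega, (bu_pp_iff hPm hPi hie).mp hbu⟩, rfl⟩
    · rintro ⟨i, ⟨hie, hcond⟩, rfl⟩
      exact ⟨hPm.pow i, (bu_pp_iff hPm hPi (by omega)).mpr hcond⟩
  rw [sigmaBU, hset, finsum_mem_coe_finset,
    Finset.sum_image (fun i _ j _ hij => mipow_inj hPi hij)]

lemma sigmaBU_triple_mul (hPm : P.Monic) (hPi : Irreducible P) (hQm : Q.Monic)
    (hQi : Irreducible Q) (hRm : R.Monic) (hRi : Irreducible R)
    (hPQ : P ≠ Q) (hPR : P ≠ R) (hQR : Q ≠ R) (h k l : ℕ) :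
    sigmaBU (P ^ h * Q ^ k * R ^ l)
      = (∑ i ∈ buIdx h, P ^ i) * (∑ j ∈ buIdx k, Q ^ j) * (∑ m ∈ buIdx l, R ^ m) := by
  classical
  set s : Finset (ℕ × ℕ × ℕ) := buIdx h ×ˢ (buIdx k ×ˢ buIdx l) with hs
  have hset : {D : F4[X] | D.Monic ∧ IsBiunitaryDivisor D (P ^ h * Q ^ k * R ^ l)}
      = ↑(s.image (fun x => P ^ x.1 * Q ^ x.2.1 * R ^ x.2.2)) := by
    ext D
    simp only [Finset.coe_image, Set.mem_image, Finset.mem_coe, hs, Finset.mem_product,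
      buIdx, Finset.mem_filter, Finset.mem_range, Set.mem_setOf_eq]
    constructor
    · rintro ⟨hDm, hbu⟩
      obtain ⟨i, j, m, hih, hjk, hml, rfl⟩ :=
        dvd_triple_decomp hPm hPi hQm hQi hRm hRi hDm hbu.1
      obtain ⟨c1, c2, c3⟩ :=
        (bu_triple_iff hPm hPi hQm hQi hRm hRi hPQ hPR hQR hih hjk hml).mp hbu
      exact ⟨(i, j, m), ⟨⟨show i < h + 1 by omega, c1⟩, ⟨show j < k + 1 by omega, c2⟩,
        ⟨show m < l + 1 by omega, c3⟩⟩, rfl⟩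
    · rintro ⟨⟨i, j, m⟩, ⟨⟨hih, c1⟩, ⟨hjk, c2⟩, ⟨hml, c3⟩⟩, rfl⟩
      refine ⟨((hPm.pow i).mul (hQm.pow j)).mul (hRm.pow m), ?_⟩
      exact (bu_triple_iff hPm hPi hQm hQi hRm hRi hPQ hPR hQR
        (by omega) (by omega) (by omega)).mpr ⟨c1, c2, c3⟩
  have hinj : ∀ x ∈ s, ∀ y ∈ s,
      (fun x : ℕ × ℕ × ℕ => P ^ x.1 * Q ^ x.2.1 * R ^ x.2.2) x
        = (fun x : ℕ × ℕ × ℕ => P ^ x.1 * Q ^ x.2.1 * R ^ x.2.2) y → x = y := by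
    rintro ⟨a, b, c⟩ - ⟨a', b', c'⟩ - he
    obtain ⟨h1, h2, h3⟩ := triple_inj hPm hPi hQm hQi hRm hRi hPQ hPR hQR he
    simp_all
  rw [sigmaBU, hset, finsum_mem_coe_finset, Finset.sum_image hinj, hs, Finset.sum_product]
  simp only [Finset.sum_product]
  have hrhs : (∑ i ∈ buIdx h, P ^ i) * (∑ j ∈ buIdx k, Q ^ j) * (∑ m ∈ buIdx l, R ^ m)
      = ∑ i ∈ buIdx h, ∑ j ∈ buIdx k, ∑ m ∈ buIdx l, P ^ i * Q ^ j * R ^ m := by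
    rw [Finset.sum_mul_sum, Finset.sum_mul]
    refine Finset.sum_congr rfl fun i _ => ?_
    rw [Finset.sum_mul]
    refine Finset.sum_congr rfl fun j _ => ?_
    rw [Finset.mul_sum]
  rw [hrhs]

end SigmaBU

/-- `gsum p n = 1 + p + ... + p^(n-1)` (`n` terms). -/
def gsum (p : F4[X]) (n : ℕ) : F4[X] := ∑ i ∈ Finset.range n, p ^ i

instance : Fact (Nat.Prime 2) := ⟨Nat.prime_two⟩

lemma charP_F4X : CharP F4[X] 2 := inferInstance

section Gsum
variable {P : F4[X]}

lemma gsum_monic_natDegree (hPm : P.Monic) (hd : 0 < P.natDegree) (n : ℕ) :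
    (gsum P (n + 1)).Monic ∧ (gsum P (n + 1)).natDegree = n * P.natDegree := by
  induction n with
  | zero => simp [gsum]
  | succ m ih =>
    have hstep : gsum P (m + 2) = gsum P (m + 1) + P ^ (m + 1) := by
      rw [gsum, gsum, Finset.sum_range_succ]
    have hdeglt : (gsum P (m + 1)).degree < (P ^ (m + 1)).degree := by
      rw [degree_eq_natDegree ih.1.ne_zero, degree_eq_natDegree (hPm.pow (m+1)).ne_zero,
        ih.2, natDegree_pow]
      exact_mod_cast (Nat.mul_lt_mul_right hd).mpr (Nat.lt_succ_self m)
    constructor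
    · rw [hstep]; exact (hPm.pow (m + 1)).add_of_right hdeglt
    · rw [hstep, natDegree_add_eq_right_of_degree_lt hdeglt, natDegree_pow]

lemma gsum_monic (hPm : P.Monic) (hd : 0 < P.natDegree) (n : ℕ) : (gsum P (n + 1)).Monic :=
  (gsum_monic_natDegree hPm hd n).1

lemma gsum_not_unit (hPm : P.Monic) (hd : 0 < P.natDegree) {n : ℕ} (hn : 1 ≤ n) :
    ¬ IsUnit (gsum P (n + 1)) := by
  apply not_isUnit_of_natDegree_pos
  rw [(gsum_monic_natDegree hPm hd n).2]
  exact Nat.mul_pos hn hd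

lemma gsum_mul_eq (P : F4[X]) (n : ℕ) : (P + 1) * gsum P n = P ^ n + 1 := by
  have := geom_sum_mul P n
  rw [CharTwo.sub_eq_add, CharTwo.sub_eq_add] at this
  rw [mul_comm, gsum, this]

lemma gsum_succ (P : F4[X]) (n : ℕ) : gsum P (n + 1) = P * gsum P n + 1 := by
  rw [gsum, gsum, geom_sum_succ]

lemma gsum_coprime_succ (P : F4[X]) (n : ℕ) : IsCoprime (gsum P n) (gsum P (n + 1)) := by
  refine ⟨P, 1, ?_⟩
  rw [one_mul, gsum_succ, ← add_assoc, CharTwo.add_self_eq_zero, zero_add]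

lemma gsum_even_factor (P : F4[X]) (c : ℕ) :
    gsum P (2 * c + 2) = (P + 1) * ∑ i ∈ Finset.range (c + 1), P ^ (2 * i) := by
  induction c with
  | zero => simp [gsum, Finset.sum_range_succ]; ring
  | succ m ih =>
    have h1 : 2 * (m + 1) + 2 = (2 * m + 2) + 1 + 1 := by ring
    rw [h1, gsum, Finset.sum_range_succ, Finset.sum_range_succ, ← gsum, ih,
      Finset.sum_range_succ (fun i => P ^ (2 * i)) (m + 1)]
    ring

end Gsum

lemma gsum_mul_decomp (p : F4[X]) (d e : ℕ) :
    gsum p (d * e) = gsum p d * gsum (p ^ d) e := by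
  induction e with
  | zero => simp [gsum]
  | succ m ih =>
    have h1 : d * (m + 1) = d * m + d := by ring
    have h2 : ∑ i ∈ Finset.range d, p ^ (d * m + i)
        = (p ^ d) ^ m * ∑ i ∈ Finset.range d, p ^ i := by
      rw [Finset.mul_sum]
      refine Finset.sum_congr rfl fun i _ => ?_
      rw [← pow_mul, ← pow_add]
    simp only [gsum] at ih ⊢
    rw [h1, Finset.sum_range_add, Finset.sum_range_succ, ih, h2]
    ring

lemma natDegree_gsum_X (n : ℕ) : (gsum (X : F4[X]) (n + 1)).natDegree = n := by
  have := (gsum_monic_natDegree (monic_X) (by simp) n).2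
  simpa using this

lemma gsum_X_squarefree (n : ℕ) : Squarefree (gsum (X : F4[X]) (2 * n + 1)) := by
  have hdvd : gsum (X : F4[X]) (2 * n + 1) ∣ X ^ (2 * n + 1) - C 1 := by
    refine ⟨X - 1, ?_⟩
    have hgs := geom_sum_mul (X : F4[X]) (2 * n + 1)
    simp only [gsum]
    rw [hgs]
    simp
  have hsep : (X ^ (2 * n + 1) - C (1 : F4)).Separable := by
    refine separable_X_pow_sub_C 1 ?_ one_ne_zero
    have : ¬ (2 ∣ 2 * n + 1) := by omega
    rw [Ne, CharP.cast_eq_zero_iff F4 2]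
    exact this
  exact (hsep.squarefree).squarefree_of_dvd hdvd

lemma gsum_X_not_irreducible {n : ℕ} (hn : 1 ≤ n) :
    ¬ Irreducible (gsum (X : F4[X]) (2 * n + 1)) := by
  intro hirr
  set c : F4[X] := gsum (X : F4[X]) (2 * n + 1) with hc
  by_cases hp : Nat.Prime (2 * n + 1)
  · -- prime case: counting argument in the field F4[X]/(c)
    haveI : Fact (Irreducible c) := ⟨hirr⟩
    haveI : Fintype F4 := Fintype.ofFinite F4
    have hcardF4 : Fintype.card F4 = 4 := by
      have := GaloisField.card 2 2 (by norm_num)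
      simpa [Nat.card_eq_fintype_card] using this
    have hc0 : c ≠ 0 := hirr.ne_zero
    let pb := AdjoinRoot.powerBasis hc0
    haveI : Fintype (AdjoinRoot c) := Module.fintypeOfFintype pb.basis
    have hdim : pb.dim = 2 * n := by
      have hnd : c.natDegree = 2 * n := natDegree_gsum_X (2 * n)
      simp [pb, AdjoinRoot.powerBasis, hnd]
    have hcardK : Fintype.card (AdjoinRoot c) = 4 ^ (2 * n) := by
      rw [Module.card_fintype pb.basis, hcardF4]
      congr 1
      simp [hdim]
    haveI : CharP (AdjoinRoot c) 2 :=
      charP_of_injective_algebraMap (algebraMap F4 (AdjoinRoot c)).injective 2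
    set r : AdjoinRoot c := AdjoinRoot.root c with hr
    have hrpow : r ^ (2 * n + 1) = 1 := by
      have hdvd : c ∣ X ^ (2 * n + 1) - 1 := by
        refine ⟨X - 1, ?_⟩
        have hgs := geom_sum_mul (X : F4[X]) (2 * n + 1)
        simp only [hc, gsum]
        rw [hgs]
      have h0 : AdjoinRoot.mk c (X ^ (2 * n + 1) - 1) = 0 := AdjoinRoot.mk_eq_zero.mpr hdvd
      rw [map_sub, map_pow, map_one, AdjoinRoot.mk_X, sub_eq_zero] at h0
      exact h0
    have hdvd_nat : (2 * n + 1) ∣ 2 ^ (2 * n) - 1 := by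
      haveI : Fact (Nat.Prime (2 * n + 1)) := ⟨hp⟩
      have h2ne : (2 : ZMod (2 * n + 1)) ≠ 0 := by
        intro h2
        rw [show (2 : ZMod (2 * n + 1)) = ((2 : ℕ) : ZMod (2 * n + 1)) by norm_cast,
          ZMod.natCast_eq_zero_iff] at h2
        have := Nat.le_of_dvd (by norm_num) h2
        omega
      have hfl : (2 : ZMod (2 * n + 1)) ^ (2 * n + 1 - 1) = 1 :=
        ZMod.pow_card_sub_one_eq_one h2ne
      have hcast : ((2 ^ (2 * n) : ℕ) : ZMod (2 * n + 1)) = ((1 : ℕ) : ZMod (2 * n + 1)) := by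
        push_cast
        simpa using hfl
      have hmod := (ZMod.natCast_eq_natCast_iff _ _ _).mp hcast
      exact (Nat.modEq_iff_dvd' Nat.one_le_two_pow).mp hmod.symm
    obtain ⟨e, he⟩ := hdvd_nat
    have hM1 : 2 ^ (2 * n) = (2 * n + 1) * e + 1 := by
      have h1 : 1 ≤ 2 ^ (2 * n) := Nat.one_le_two_pow
      omega
    have hrM : r ^ 2 ^ (2 * n) = r := by
      calc r ^ 2 ^ (2 * n) = (r ^ (2 * n + 1)) ^ e * r := by
            rw [hM1, pow_add, pow_mul, pow_one]
        _ = r := by rw [hrpow, one_pow, one_mul]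
    have hfix : ∀ y : AdjoinRoot c, y ^ 2 ^ (2 * n) = y := by
      intro y
      obtain ⟨g, rfl⟩ := AdjoinRoot.mk_surjective y
      induction g using Polynomial.induction_on' with
      | add p q hp' hq' => rw [map_add, add_pow_char_pow (p := 2), hp', hq']
      | monomial m a =>
        have hmk : AdjoinRoot.mk c (Polynomial.monomial m a)
            = algebraMap F4 (AdjoinRoot c) a * r ^ m := by
          rw [← Polynomial.C_mul_X_pow_eq_monomial, map_mul, map_pow, AdjoinRoot.mk_X,
            AdjoinRoot.mk_C, ← AdjoinRoot.algebraMap_eq]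
        have ha : a ^ 2 ^ (2 * n) = a := by
          have h4 : (2 : ℕ) ^ (2 * n) = 4 ^ n := by
            rw [pow_mul]; norm_num
          rw [h4, ← hcardF4]
          exact FiniteField.pow_card_pow n a
        rw [hmk, mul_pow, ← map_pow, ha, ← pow_mul, mul_comm m, pow_mul, hrM]
    -- counting: all 4^(2n) elements are roots of X^(2^(2n)) - X
    set qq : (AdjoinRoot c)[X] := X ^ 2 ^ (2 * n) - X with hqq
    have hM2 : (1 : WithBot ℕ) < (2 ^ (2 * n) : ℕ) := by
      have : (2 : ℕ) ≤ 2 ^ (2 * n) := by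
        calc (2:ℕ) = 2 ^ 1 := by norm_num
          _ ≤ 2 ^ (2 * n) := Nat.pow_le_pow_right (by norm_num) (by omega)
      exact_mod_cast this
    have hdegq : qq.degree = (2 ^ (2 * n) : ℕ) := by
      rw [hqq, degree_sub_eq_left_of_degree_lt (by rw [degree_X_pow, degree_X]; exact hM2),
        degree_X_pow]
    have hq0 : qq ≠ 0 := by
      intro h0
      rw [h0, degree_zero] at hdegq
      exact absurd hdegq (by
        intro hbot
        exact absurd hbot.symm (WithBot.coe_ne_bot (a := ((2 ^ (2 * n) : ℕ) : ℕ))))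
    have hsub : (Finset.univ : Finset (AdjoinRoot c)) ⊆ qq.roots.toFinset := by
      intro y _
      rw [Multiset.mem_toFinset, Polynomial.mem_roots hq0]
      simp only [hqq, IsRoot.def, eval_sub, eval_pow, eval_X]
      rw [hfix y, sub_self]
    have hcount : Fintype.card (AdjoinRoot c) ≤ 2 ^ (2 * n) := by
      calc Fintype.card (AdjoinRoot c) = (Finset.univ : Finset (AdjoinRoot c)).card := rfl
        _ ≤ qq.roots.toFinset.card := Finset.card_le_card hsub
        _ ≤ Multiset.card qq.roots := Multiset.toFinset_card_le _
        _ ≤ qq.natDegree := Polynomial.card_roots' qq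
        _ = 2 ^ (2 * n) := by
            rw [Polynomial.natDegree_eq_of_degree_eq_some hdegq]
    rw [hcardK] at hcount
    have hgt : 2 ^ (2 * n) < 4 ^ (2 * n) := by
      exact Nat.pow_lt_pow_left (by norm_num) (by omega)
    omega
  · -- composite case: explicit factorization
    obtain ⟨d, hd_dvd, hd2, hdlt⟩ := Nat.exists_dvd_of_not_prime2 (by omega) hp
    obtain ⟨e, he⟩ := hd_dvd
    have he0 : e ≠ 0 := by rintro rfl; omega
    have he1 : e ≠ 1 := by rintro rfl; omega
    have hfac : c = gsum X d * gsum (X ^ d) e := by rw [hc, he, gsum_mul_decomp]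
    have hu1 : ¬ IsUnit (gsum (X : F4[X]) d) := by
      rw [show d = (d - 1) + 1 by omega]
      exact gsum_not_unit monic_X (by simp) (by omega)
    have hu2 : ¬ IsUnit (gsum ((X : F4[X]) ^ d) e) := by
      rw [show e = (e - 1) + 1 by omega]
      refine gsum_not_unit (monic_X.pow d) ?_ (by omega)
      rw [natDegree_pow, natDegree_X, mul_one]
      omega
    rcases hirr.isUnit_or_isUnit hfac with hu | hu
    · exact hu1 hu
    · exact hu2 hu

lemma nonunit_natDegree_pos {u : F4[X]} (h0 : u ≠ 0) (hu : ¬IsUnit u) : 0 < u.natDegree := by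
  rcases Nat.eq_zero_or_pos u.natDegree with hz | hpos
  · exfalso
    apply hu
    have hC := Polynomial.eq_C_of_natDegree_eq_zero hz
    have hc0 : u.coeff 0 ≠ 0 := by
      intro hc
      apply h0
      rw [hC, hc, map_zero]
    rw [hC]
    exact isUnit_C.mpr (isUnit_iff_ne_zero.mpr hc0)
  · exact hpos

lemma gsum_X_two_factors {n : ℕ} (hn : 1 ≤ n) :
    ∃ u v : F4[X], gsum (X : F4[X]) (2 * n + 1) = u * v ∧ IsCoprime u v ∧
      ¬IsUnit u ∧ ¬IsUnit v := by
  have hni := gsum_X_not_irreducible hn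
  have hnu : ¬ IsUnit (gsum (X : F4[X]) (2 * n + 1)) :=
    gsum_not_unit monic_X (by simp) (by omega)
  rw [irreducible_iff] at hni
  push_neg at hni
  obtain ⟨u, v, heq, hu, hv⟩ := hni hnu
  refine ⟨u, v, heq, ?_, hu, hv⟩
  have hsf := gsum_X_squarefree n
  rw [← EuclideanDomain.gcd_isUnit_iff]
  by_contra hgu
  have hdd : EuclideanDomain.gcd u v * EuclideanDomain.gcd u v ∣ gsum (X : F4[X]) (2 * n + 1) := by
    rw [heq]
    exact mul_dvd_mul (EuclideanDomain.gcd_dvd_left u v) (EuclideanDomain.gcd_dvd_right u v)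
  exact hgu (hsf _ hdd)

lemma comp_coprime {u v p : F4[X]} (hco : IsCoprime u v) : IsCoprime (u.comp p) (v.comp p) := by
  obtain ⟨a, b, hab⟩ := hco
  exact ⟨a.comp p, b.comp p, by rw [← mul_comp, ← mul_comp, ← add_comp, hab, one_comp]⟩

lemma gsum_comp (p : F4[X]) (m : ℕ) : (gsum X m).comp p = gsum p m := by
  simp only [gsum, Polynomial.comp, Polynomial.eval₂_finset_sum]
  refine Finset.sum_congr rfl fun i _ => ?_
  rw [eval₂_X_pow]

lemma gsum_even_two_factors {P : F4[X]} (hPm : P.Monic) (hPi : Irreducible P) {n : ℕ}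
    (hn : 1 ≤ n) :
    ∃ u v : F4[X], gsum P (2 * n + 1) = u * v ∧ IsCoprime u v ∧ ¬IsUnit u ∧ ¬IsUnit v := by
  obtain ⟨u, v, heq, hco, hu, hv⟩ := gsum_X_two_factors hn
  have hu0 : u ≠ 0 := by
    intro h0
    exact (gsum_monic monic_X (by simp) (2 * n)).ne_zero (by rw [heq, h0, zero_mul])
  have hv0 : v ≠ 0 := by
    intro h0
    exact (gsum_monic monic_X (by simp) (2 * n)).ne_zero (by rw [heq, h0, mul_zero])
  refine ⟨u.comp P, v.comp P, ?_, comp_coprime hco, ?_, ?_⟩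
  · rw [← mul_comp, ← heq, gsum_comp]
  · apply not_isUnit_of_natDegree_pos
    rw [natDegree_comp]
    exact Nat.mul_pos (nonunit_natDegree_pos hu0 hu) hPi.natDegree_pos
  · apply not_isUnit_of_natDegree_pos
    rw [natDegree_comp]
    exact Nat.mul_pos (nonunit_natDegree_pos hv0 hv) hPi.natDegree_pos

lemma coprime_add_one_gsum_odd (P : F4[X]) (c : ℕ) : IsCoprime (P + 1) (gsum P (2 * c + 3)) := by
  have hg : gsum P (2 * c + 3)
      = P * ((P + 1) * ∑ i ∈ Finset.range (c + 1), P ^ (2 * i)) + 1 := by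
    rw [show 2 * c + 3 = (2 * c + 2) + 1 by ring, gsum_succ, gsum_even_factor]
  refine ⟨P * ∑ i ∈ Finset.range (c + 1), P ^ (2 * i), 1, ?_⟩
  rw [one_mul, hg, show (P * ∑ i ∈ Finset.range (c + 1), P ^ (2 * i)) * (P + 1)
      = P * ((P + 1) * ∑ i ∈ Finset.range (c + 1), P ^ (2 * i)) by ring,
    ← add_assoc, CharTwo.add_self_eq_zero, zero_add]

lemma not_dvd_sum_buIdx {P : F4[X]} (hPi : Irreducible P) (e : ℕ) :
    ¬ P ∣ ∑ i ∈ buIdx e, P ^ i := by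
  intro hdvd
  have h0mem : 0 ∈ buIdx e := by simp [buIdx]
  have hsplit := Finset.add_sum_erase (buIdx e) (fun i => P ^ i) h0mem
  have hE : P ∣ ∑ i ∈ (buIdx e).erase 0, P ^ i :=
    Finset.dvd_sum fun i hi => dvd_pow_self P (Finset.ne_of_mem_erase hi)
  have h1 : P ∣ (1 : F4[X]) := by
    have heq : (1 : F4[X]) = (∑ i ∈ buIdx e, P ^ i) + ∑ i ∈ (buIdx e).erase 0, P ^ i := by
      rw [← hsplit]
      simp only [pow_zero]
      rw [add_assoc, CharTwo.add_self_eq_zero, add_zero]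
    rw [heq]
    exact dvd_add hdvd hE
  exact hPi.not_isUnit (isUnit_of_dvd_one h1)

lemma omega_le_two {N A B : F4[X]}
    (hmem : ∀ T : F4[X], T.Monic → Irreducible T → T ∣ N → T = A ∨ T = B) :
    omegaCount N ≤ 2 := by
  have hsub : {T : F4[X] | T.Monic ∧ Irreducible T ∧ T ∣ N} ⊆ {A, B} := by
    rintro T ⟨hTm, hTi, hTd⟩
    rcases hmem T hTm hTi hTd with rfl | rfl
    · exact Set.mem_insert _ _
    · exact Set.mem_insert_of_mem _ rfl
  calc omegaCount N ≤ ({A, B} : Set F4[X]).ncard :=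
        Set.ncard_le_ncard hsub (Set.toFinite _)
    _ ≤ ({B} : Set F4[X]).ncard + 1 := Set.ncard_insert_le _ _
    _ ≤ 2 := by rw [Set.ncard_singleton]

lemma factor_mem {P Q R : F4[X]} (hPm : P.Monic) (hQm : Q.Monic) (hRm : R.Monic)
    (hPi : Irreducible P) (hQi : Irreducible Q) (hRi : Irreducible R)
    {h k l : ℕ} {T : F4[X]} (hTm : T.Monic) (hTi : Irreducible T)
    (hT : T ∣ P ^ h * Q ^ k * R ^ l) : T = P ∨ T = Q ∨ T = R := by
  rcases hTi.prime.dvd_mul.mp hT with hd | hd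
  · rcases hTi.prime.dvd_mul.mp hd with hd' | hd'
    · exact Or.inl (eq_of_monic_of_associated hTm hPm
        (hTi.associated_of_dvd hPi (hTi.prime.dvd_of_dvd_pow hd')))
    · exact Or.inr (Or.inl (eq_of_monic_of_associated hTm hQm
        (hTi.associated_of_dvd hQi (hTi.prime.dvd_of_dvd_pow hd'))))
  · exact Or.inr (Or.inr (eq_of_monic_of_associated hTm hRm
      (hTi.associated_of_dvd hRi (hTi.prime.dvd_of_dvd_pow hd))))

lemma no_two_prime_factors {P Q R : F4[X]} (hPm : P.Monic) (hPi : Irreducible P)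
    {N W : F4[X]} {t : ℕ} (ht : 1 ≤ t)
    (hmem : ∀ T : F4[X], T.Monic → Irreducible T → T ∣ N → T = Q ∨ T = R)
    (hdvd1 : gsum P (2 * t + 1) ∣ N) (hdvdW : W ∣ N)
    (hco : IsCoprime (gsum P (2 * t + 1)) W) (hWu : ¬ IsUnit W) : False := by
  obtain ⟨u, v, heq, huv, hu, hv⟩ := gsum_even_two_factors hPm hPi ht
  obtain ⟨T1, hT1m, hT1i, hT1d⟩ := Polynomial.exists_monic_irreducible_factor u hu
  obtain ⟨T2, hT2m, hT2i, hT2d⟩ := Polynomial.exists_monic_irreducible_factor v hv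
  obtain ⟨T3, hT3m, hT3i, hT3d⟩ := Polynomial.exists_monic_irreducible_factor W hWu
  have hT1G : T1 ∣ gsum P (2 * t + 1) := hT1d.trans (heq ▸ dvd_mul_right u v)
  have hT2G : T2 ∣ gsum P (2 * t + 1) := hT2d.trans (heq ▸ dvd_mul_left v u)
  have hT1QR := hmem T1 hT1m hT1i (hT1G.trans hdvd1)
  have hT2QR := hmem T2 hT2m hT2i (hT2G.trans hdvd1)
  have hT3QR := hmem T3 hT3m hT3i (hT3d.trans hdvdW)
  have hT12 : T1 ≠ T2 := by
    rintro rfl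
    exact hT1i.not_isUnit (huv.isUnit_of_dvd' hT1d hT2d)
  have hT3G : T3 ∣ gsum P (2 * t + 1) := by
    rcases hT3QR with rfl | rfl
    · rcases hT1QR with rfl | h1
      · exact hT1G
      · rcases hT2QR with rfl | h2
        · exact hT2G
        · exact absurd (h1.trans h2.symm) hT12
    · rcases hT1QR with h1 | rfl
      · rcases hT2QR with h2 | rfl
        · exact absurd (h1.trans h2.symm) hT12
        · exact hT2G
      · exact hT1G
  exact hT3i.not_isUnit (hco.isUnit_of_dvd' hT3G hT3d)

lemma buIdx_even {m : ℕ} (hm : 0 < m) : buIdx (2 * m) = (Finset.range (2 * m + 1)).erase m := by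
  ext i
  simp only [buIdx, Finset.mem_filter, Finset.mem_range, Finset.mem_erase]
  omega

lemma buIdx_odd {e : ℕ} (he : Odd e) : buIdx e = Finset.range (e + 1) := by
  obtain ⟨r, hr⟩ := he
  ext i
  simp only [buIdx, Finset.mem_filter, Finset.mem_range]
  omega

lemma add_one_natDegree_pos {P : F4[X]} (hPm : P.Monic) (hPi : Irreducible P) :
    0 < (P + 1).natDegree := by
  have hdlt : (1 : F4[X]).degree < P.degree := by
    rw [degree_one, degree_eq_natDegree hPm.ne_zero]
    exact_mod_cast hPi.natDegree_pos
  rw [natDegree_add_eq_left_of_degree_lt hdlt]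
  exact hPi.natDegree_pos

theorem stmt12 (P Q R : F4[X]) (hPm : P.Monic) (hQm : Q.Monic) (hRm : R.Monic)
    (hPi : Irreducible P) (hQi : Irreducible Q) (hRi : Irreducible R)
    (hPQ : P ≠ Q) (hPR : P ≠ R) (hQR : Q ≠ R)
    (hdeg1 : P.natDegree ≤ Q.natDegree) (hdeg2 : Q.natDegree ≤ R.natDegree)
    (h k l : ℕ) (hh : 0 < h) (hk : 0 < k) (hl : 0 < l)
    (hbup : IsBUPerfect (P ^ h * Q ^ k * R ^ l)) :
    omegaCount (sigmaBU (P ^ h)) ≤ 2 ∧ omegaCount (sigmaBU (Q ^ k)) ≤ 2 ∧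
    omegaCount (sigmaBU (R ^ l)) ≤ 2 ∧
    (Even h → h = 2) ∧ (Odd h → ∃ r : ℕ, 0 < r ∧ h = 2 ^ r - 1) := by
  have hprod : (∑ i ∈ buIdx h, P ^ i) * (∑ i ∈ buIdx k, Q ^ i) * (∑ i ∈ buIdx l, R ^ i)
      = P ^ h * Q ^ k * R ^ l := by
    rw [← sigmaBU_triple_mul hPm hPi hQm hQi hRm hRi hPQ hPR hQR h k l]
    exact hbup
  have hNPd : (∑ i ∈ buIdx h, P ^ i) ∣ P ^ h * Q ^ k * R ^ l :=
    ⟨(∑ i ∈ buIdx k, Q ^ i) * (∑ i ∈ buIdx l, R ^ i), by rw [← hprod]; ring⟩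
  have hNQd : (∑ i ∈ buIdx k, Q ^ i) ∣ P ^ h * Q ^ k * R ^ l :=
    ⟨(∑ i ∈ buIdx h, P ^ i) * (∑ i ∈ buIdx l, R ^ i), by rw [← hprod]; ring⟩
  have hNRd : (∑ i ∈ buIdx l, R ^ i) ∣ P ^ h * Q ^ k * R ^ l :=
    ⟨(∑ i ∈ buIdx h, P ^ i) * (∑ i ∈ buIdx k, Q ^ i), by rw [← hprod]; ring⟩
  have hPnd : ¬ P ∣ (∑ i ∈ buIdx h, P ^ i) := not_dvd_sum_buIdx hPi h
  have hQnd : ¬ Q ∣ (∑ i ∈ buIdx k, Q ^ i) := not_dvd_sum_buIdx hQi k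
  have hRnd : ¬ R ∣ (∑ i ∈ buIdx l, R ^ i) := not_dvd_sum_buIdx hRi l
  have hmemP : ∀ T : F4[X], T.Monic → Irreducible T → T ∣ (∑ i ∈ buIdx h, P ^ i) →
      T = Q ∨ T = R := by
    intro T hTm hTi hTd
    rcases factor_mem hPm hQm hRm hPi hQi hRi hTm hTi (hTd.trans hNPd) with rfl | hx
    · exact absurd hTd hPnd
    · exact hx
  have hmemQ : ∀ T : F4[X], T.Monic → Irreducible T → T ∣ (∑ i ∈ buIdx k, Q ^ i) →
      T = P ∨ T = R := by
    intro T hTm hTi hTd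
    rcases factor_mem hPm hQm hRm hPi hQi hRi hTm hTi (hTd.trans hNQd) with hx | hx
    · exact Or.inl hx
    · rcases hx with rfl | hx
      · exact absurd hTd hQnd
      · exact Or.inr hx
  have hmemR : ∀ T : F4[X], T.Monic → Irreducible T → T ∣ (∑ i ∈ buIdx l, R ^ i) →
      T = P ∨ T = Q := by
    intro T hTm hTi hTd
    rcases factor_mem hPm hQm hRm hPi hQi hRi hTm hTi (hTd.trans hNRd) with hx | hx
    · exact Or.inl hx
    · rcases hx with rfl | rfl
      · exact Or.inr rfl
      · exact absurd hTd hRnd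
  refine ⟨?_, ?_, ?_, ?_, ?_⟩
  · rw [sigmaBU_prime_pow hPm hPi h]
    exact omega_le_two hmemP
  · rw [sigmaBU_prime_pow hQm hQi k]
    exact omega_le_two hmemQ
  · rw [sigmaBU_prime_pow hRm hRi l]
    exact omega_le_two hmemR
  · -- Even case
    intro hEven
    obtain ⟨m, hm⟩ : ∃ m, h = 2 * m := by
      obtain ⟨r, hr⟩ := hEven
      exact ⟨r, by omega⟩
    by_contra hne
    have hm2 : 2 ≤ m := by omega
    have hmm : m ∈ Finset.range (2 * m + 1) := by
      simp only [Finset.mem_range]; omega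
    have hsplit := Finset.add_sum_erase (Finset.range (2 * m + 1)) (fun i => P ^ i) hmm
    have h4 : (∑ i ∈ buIdx h, P ^ i) = gsum P (2 * m + 1) + P ^ m := by
      rw [hm, buIdx_even (by omega)]
      have hg : gsum P (2 * m + 1)
          = P ^ m + ∑ i ∈ (Finset.range (2 * m + 1)).erase m, P ^ i := by
        rw [gsum, ← hsplit]
      rw [hg, add_comm (P ^ m) _, add_assoc, CharTwo.add_self_eq_zero, add_zero]
    have hsplit2 : gsum P (2 * m + 1) = gsum P m + P ^ m * gsum P (m + 1) := by
      simp only [gsum]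
      rw [show 2 * m + 1 = m + (m + 1) by ring, Finset.sum_range_add]
      congr 1
      rw [Finset.mul_sum]
      exact Finset.sum_congr rfl fun i _ => by rw [← pow_add]
    have h3 : gsum P (m + 1) = gsum P m + P ^ m := by
      simp only [gsum]; rw [Finset.sum_range_succ]
    have hfac : (∑ i ∈ buIdx h, P ^ i) = (P + 1) * gsum P m * gsum P (m + 1) := by
      have hNP2 : (∑ i ∈ buIdx h, P ^ i) = (P ^ m + 1) * gsum P (m + 1) := by
        rw [h4, hsplit2, h3]; ring
      rw [hNP2, ← gsum_mul_eq]
    rcases Nat.even_or_odd m with hme | hmo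
    · obtain ⟨t, ht⟩ := hme
      have ht1 : 1 ≤ t := by omega
      refine no_two_prime_factors hPm hPi (W := gsum P m) ht1 hmemP ?_ ?_ ?_ ?_
      · rw [show 2 * t + 1 = m + 1 by omega]
        exact ⟨(P + 1) * gsum P m, by rw [hfac]; ring⟩
      · exact ⟨(P + 1) * gsum P (m + 1), by rw [hfac]; ring⟩
      · rw [show 2 * t + 1 = m + 1 by omega]
        exact (gsum_coprime_succ P m).symm
      · rw [show m = (m - 1) + 1 by omega]
        exact gsum_not_unit hPm hPi.natDegree_pos (by omega)
    · obtain ⟨t, ht⟩ := hmo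
      have ht1 : 1 ≤ t := by omega
      refine no_two_prime_factors hPm hPi (W := gsum P (m + 1)) ht1 hmemP ?_ ?_ ?_ ?_
      · rw [show 2 * t + 1 = m by omega]
        exact ⟨(P + 1) * gsum P (m + 1), by rw [hfac]; ring⟩
      · exact ⟨(P + 1) * gsum P m, by rw [hfac]; ring⟩
      · rw [show 2 * t + 1 = m by omega]
        exact gsum_coprime_succ P m
      · exact gsum_not_unit hPm hPi.natDegree_pos (by omega)
  · -- Odd case
    intro hOdd
    have hfact : 2 ^ (h + 1).factorization 2 * ((h + 1) / 2 ^ (h + 1).factorization 2) = h + 1 :=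
      Nat.ordProj_mul_ordCompl_eq_self (h + 1) 2
    set s := (h + 1).factorization 2 with hs
    set t := (h + 1) / 2 ^ s with htdef
    have htodd : ¬ 2 ∣ t := Nat.not_dvd_ordCompl Nat.prime_two (by omega)
    have hs1 : 1 ≤ s := by
      have h2dvd : 2 ∣ h + 1 := by
        obtain ⟨r, hr⟩ := hOdd; omega
      have hpos := Nat.Prime.factorization_pos_of_dvd Nat.prime_two (by omega) h2dvd
      rw [← hs] at hpos
      omega
    clear_value s t
    clear hs htdef
    have ht0 : t ≠ 0 := by
      intro h0
      rw [h0, mul_zero] at hfact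
      omega
    by_cases ht1 : t = 1
    · refine ⟨s, hs1, ?_⟩
      rw [ht1, mul_one] at hfact
      omega
    · exfalso
      have ht3 : 3 ≤ t := by omega
      have hNPg : (∑ i ∈ buIdx h, P ^ i) = gsum P (h + 1) := by
        rw [buIdx_odd hOdd, gsum]
      have hP1pos := add_one_natDegree_pos hPm hPi
      have hP1ne : (P + 1) ≠ 0 := by
        intro h0
        rw [h0, natDegree_zero] at hP1pos
        omega
      have hkey : (∑ i ∈ buIdx h, P ^ i) = (P + 1) ^ (2 ^ s - 1) * gsum P t ^ 2 ^ s := by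
        apply mul_left_cancel₀ hP1ne
        rw [hNPg, gsum_mul_eq]
        have hrhs : (P + 1) * ((P + 1) ^ (2 ^ s - 1) * gsum P t ^ 2 ^ s)
            = ((P + 1) * gsum P t) ^ 2 ^ s := by
          have hexp : 2 ^ s - 1 + 1 = 2 ^ s := by
            have h2 : 1 ≤ 2 ^ s := Nat.one_le_two_pow
            omega
          rw [mul_pow, ← mul_assoc, ← pow_succ', hexp]
        rw [hrhs, gsum_mul_eq]
        rw [add_pow_char_pow (p := 2), one_pow, ← pow_mul]
        congr 1
        rw [mul_comm t _, hfact]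
      have h2s0 : 2 ^ s ≠ 0 := by positivity
      have h2s1 : 2 ^ s - 1 ≠ 0 := by
        have : 2 ≤ 2 ^ s := by
          calc (2:ℕ) = 2 ^ 1 := by norm_num
            _ ≤ 2 ^ s := Nat.pow_le_pow_right (by norm_num) hs1
        omega
      refine no_two_prime_factors hPm hPi (W := P + 1) (t := (t - 1) / 2) (by omega)
        hmemP ?_ ?_ ?_ ?_
      · rw [show 2 * ((t - 1) / 2) + 1 = t by omega, hkey]
        exact dvd_mul_of_dvd_right (dvd_pow_self _ h2s0) _
      · rw [hkey]
        exact dvd_mul_of_dvd_left (dvd_pow_self _ h2s1) _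
      · rw [show 2 * ((t - 1) / 2) + 1 = t by omega,
          show t = 2 * ((t - 3) / 2) + 3 by omega]
        exact (coprime_add_one_gsum_odd P ((t - 3) / 2)).symm
      · exact not_isUnit_of_natDegree_pos _ hP1pos
end
end

section
/- There exists no bi-unitary perfect polynomial A over 𝔽₄ with ω(A) = 3, i.e. with exactly three distinct monic irreducible factors. -/
open Polynomial
open scoped Classical

noncomputable section

/-!
Write `A = u ∏ Pᵢ ^ aᵢ`. A monic divisor `∏ Pᵢ ^ bᵢ` of `A` is bi-unitary exactly when no nonzero
`bᵢ` equals `aᵢ - bᵢ`, so `σ**` is multiplicative with `σ**(P ^ a) = ∑ P ^ b` over the `b ≤ a`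
with `b = 0 ∨ 2 b ≠ a`. In characteristic two, `σ**(P ^ a) (P + 1)` is `P ^ (a + 1) + 1` for odd
`a` and `(P ^ (h + 1) + 1) (P ^ h + 1)` for `a = 2 h`, so `P + 1` divides `σ**(P ^ a)`.

If `P` has the least degree among the three prime factors, `P + 1` is therefore one of them; call
the third one `R`. Then `R` divides `A = ∏ σ**(Pᵢ ^ aᵢ)` but none of the factors:
`σ**(R ^ e) ≡ 1` modulo `R`, while the prime factors of `σ**(P ^ a)` lie in `{P + 1, R}` and
those of `σ**((P + 1) ^ b)` in `{P, R}`. It remains to see that `R` cannot divide `P ^ n + 1` when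
all prime factors of `P ^ n + 1` lie in `{P + 1, R}`. Halving even exponents reduces this to odd
`n ≥ 3`, where over `𝔽₄` the cyclotomic polynomial `Φ n` has two distinct irreducible factors
`h₁, h₂`. The `hᵢ.comp P` are coprime divisors of `P ^ n + 1`, and neither is a power of `P + 1`,
so each has a prime factor other than `P + 1`, and these two factors are distinct.
-/

theorem exists_multiset_prod_eq_prod_pow {M : Type*} [CommMonoid M] {ι : Type*} [Fintype ι]
    {p : ι → M} {s : Multiset M} (hs : ∀ x ∈ s, ∃ i, x = p i) :
    ∃ f : ι → ℕ, s.prod = ∏ i, p i ^ f i := by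
  induction s using Multiset.induction with
  | empty => exact ⟨0, by simp⟩
  | cons x s ih =>
    obtain ⟨f, hf⟩ := ih fun y hy => hs y (Multiset.mem_cons_of_mem hy)
    obtain ⟨i, rfl⟩ := hs x (Multiset.mem_cons_self x s)
    refine ⟨f + Pi.single i 1, ?_⟩
    simp only [Multiset.prod_cons, hf, Pi.add_apply, pow_add, Finset.prod_mul_distrib]
    simp [Pi.single_apply, pow_ite, mul_comm]

theorem prod_pow_eq_mul_prod_pow_sub {M : Type*} [CommMonoid M] {ι : Type*} [Fintype ι]
    (p : ι → M) {f g : ι → ℕ} (h : f ≤ g) :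
    ∏ i, p i ^ g i = (∏ i, p i ^ f i) * ∏ i, p i ^ (g - f) i := by
  rw [← Finset.prod_mul_distrib]
  exact Finset.prod_congr rfl fun i _ => by rw [← pow_add, Pi.sub_apply, Nat.add_sub_cancel' (h i)]

section Field

open UniqueFactorizationMonoid

variable {K : Type*} [Field K]

theorem eq_of_monic_irreducible_of_dvd {P Q : K[X]} (hP : P.Monic) (hPi : Irreducible P)
    (hQ : Q.Monic) (hQi : Irreducible Q) (h : P ∣ Q) : P = Q :=
  eq_of_monic_of_associated hP hQ (hPi.associated_of_dvd hQi h)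

theorem monic_add_one {P : K[X]} (hP : P.Monic) (hP0 : P.natDegree ≠ 0) : (P + 1).Monic :=
  hP.add_of_left <| by
    rw [degree_one]
    exact natDegree_pos_iff_degree_pos.mp (Nat.pos_of_ne_zero hP0)

theorem natDegree_add_one (P : K[X]) : (P + 1).natDegree = P.natDegree := by
  rw [← C_1, natDegree_add_C]

theorem infinite_setOf_monic_irreducible : {P : K[X] | P.Monic ∧ Irreducible P}.Infinite := by
  intro hfin
  have hdvd {P : K[X]} (hP : P.Monic) (hPi : Irreducible P) : P ∣ ∏ Q ∈ hfin.toFinset, Q :=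
    Finset.dvd_prod_of_mem _ (hfin.mem_toFinset.mpr ⟨hP, hPi⟩)
  have hN : (∏ Q ∈ hfin.toFinset, Q).Monic :=
    monic_prod_of_monic _ _ fun Q hQ => (hfin.mem_toFinset.mp hQ).1
  have hdeg : 0 < (∏ Q ∈ hfin.toFinset, Q + 1).natDegree := by
    have := natDegree_le_of_dvd (hdvd monic_X irreducible_X) hN.ne_zero
    rw [natDegree_X] at this
    rwa [natDegree_add_one]
  obtain ⟨π, hπ, hπi, hπN⟩ :=
    exists_monic_irreducible_factor _ (not_isUnit_of_natDegree_pos _ hdeg)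
  exact hπi.not_isUnit (isUnit_of_dvd_one ((dvd_add_right (hdvd hπ hπi)).mp hπN))

theorem eq_pow_of_forall_irreducible_dvd_eq {D Q : K[X]} (hD : D.Monic)
    (h : ∀ π : K[X], π.Monic → Irreducible π → π ∣ D → π = Q) : ∃ k, D = Q ^ k := by
  refine ⟨Multiset.card (normalizedFactors D), ?_⟩
  rw [← Multiset.prod_replicate, ← Multiset.eq_replicate_card.mpr fun π hπ => ?_]
  · simpa [hD.leadingCoeff] using (leadingCoeff_mul_prod_normalizedFactors D).symm
  · obtain ⟨hπi, hπ, hπD⟩ := (Polynomial.mem_normalizedFactors_iff hD.ne_zero).mp hπ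
    exact h π hπ hπi hπD

theorem eq_of_comp_eq_comp {f g P : K[X]} (hP : P.natDegree ≠ 0) (h : f.comp P = g.comp P) :
    f = g := by
  have : (f - g).comp P = 0 := by rw [sub_comp, h, sub_self]
  rcases comp_eq_zero_iff.mp this with h0 | ⟨-, hPC⟩
  · exact sub_eq_zero.mp h0
  · exact absurd (by rw [hPC, natDegree_C]) hP

theorem exists_eq_C_mul_prod_pow {ι : Type*} [Fintype ι] {p : ι → K[X]} {A : K[X]} (hA : A ≠ 0)
    (h : ∀ π : K[X], π.Monic → Irreducible π → π ∣ A → ∃ i, π = p i) :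
    ∃ f : ι → ℕ, A = C A.leadingCoeff * ∏ i, p i ^ f i := by
  obtain ⟨f, hf⟩ := exists_multiset_prod_eq_prod_pow (p := p) (s := normalizedFactors A)
    fun π hπ => by
      obtain ⟨hπi, hπ, hπA⟩ := (Polynomial.mem_normalizedFactors_iff hA).mp hπ
      exact h π hπ hπi hπA
  exact ⟨f, by rw [← hf, leadingCoeff_mul_prod_normalizedFactors]⟩

end Field

structure IsMonicIrreducibleFamily {K ι : Type*} [Field K] (p : ι → K[X]) : Prop where
  monic : ∀ i, (p i).Monic
  irreducible : ∀ i, Irreducible (p i)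
  injective : Function.Injective p

namespace IsMonicIrreducibleFamily

variable {K : Type*} [Field K] {ι : Type*} {p : ι → K[X]}

theorem isCoprime (hp : IsMonicIrreducibleFamily p) {i j : ι} (h : i ≠ j) :
    IsCoprime (p i) (p j) :=
  (hp.irreducible i).coprime_iff_not_dvd.mpr fun hd => h <| hp.injective <|
    eq_of_monic_irreducible_of_dvd (hp.monic i) (hp.irreducible i) (hp.monic j)
      (hp.irreducible j) hd

theorem exists_eq_add_one (hp : IsMonicIrreducibleFamily p) [Finite ι] [Nonempty ι]
    (hfac : ∀ i, ∀ π : K[X], π.Monic → Irreducible π → π ∣ p i + 1 → ∃ j, π = p j) :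
    ∃ i j, p j = p i + 1 := by
  obtain ⟨i, hi⟩ := Finite.exists_min fun i => (p i).natDegree
  have hdeg := (hp.irreducible i).natDegree_pos
  obtain ⟨π, hπ, hπi, hπd⟩ := exists_monic_irreducible_factor (p i + 1)
    (not_isUnit_of_natDegree_pos _ (by rwa [natDegree_add_one]))
  obtain ⟨j, rfl⟩ := hfac i π hπ hπi hπd
  refine ⟨i, j, (eq_of_monic_of_dvd_of_natDegree_le hπ (monic_add_one (hp.monic i) hdeg.ne') hπd
    ?_).symm⟩
  rw [natDegree_add_one]
  exact hi j

variable [Fintype ι]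

theorem monic_prod_pow (hp : IsMonicIrreducibleFamily p) (f : ι → ℕ) :
    (∏ i, p i ^ f i).Monic :=
  monic_prod_of_monic _ _ fun i _ => (hp.monic i).pow _

theorem exists_eq_of_irreducible_dvd (hp : IsMonicIrreducibleFamily p) {π : K[X]}
    (hπ : π.Monic) (hπi : Irreducible π) {f : ι → ℕ} (h : π ∣ ∏ i, p i ^ f i) :
    ∃ i, π = p i := by
  obtain ⟨i, -, hi⟩ := (hπi.prime.dvd_finsetProd_iff _).mp h
  exact ⟨i, eq_of_monic_irreducible_of_dvd hπ hπi (hp.monic i) (hp.irreducible i)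
    (hπi.prime.dvd_of_dvd_pow hi)⟩

theorem exists_eq_prod_pow_of_dvd (hp : IsMonicIrreducibleFamily p) {D : K[X]} (hD : D.Monic)
    {g : ι → ℕ} (h : D ∣ ∏ i, p i ^ g i) : ∃ f : ι → ℕ, D = ∏ i, p i ^ f i := by
  simpa [hD.leadingCoeff] using exists_eq_C_mul_prod_pow hD.ne_zero fun π hπ hπi hπD =>
    hp.exists_eq_of_irreducible_dvd hπ hπi (hπD.trans h)

theorem pow_dvd_prod_pow_iff (hp : IsMonicIrreducibleFamily p) (i : ι) {k : ℕ} {f : ι → ℕ} :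
    p i ^ k ∣ ∏ j, p j ^ f j ↔ k ≤ f i := by
  have hcop : IsCoprime (p i ^ k) (∏ j ∈ Finset.univ.erase i, p j ^ f j) :=
    IsCoprime.prod_right fun j hj => (hp.isCoprime (Finset.ne_of_mem_erase hj).symm).pow
  rw [← Finset.mul_prod_erase _ _ (Finset.mem_univ i)]
  exact ⟨fun h => (pow_dvd_pow_iff (hp.irreducible i).ne_zero (hp.irreducible i).not_isUnit).mp
    (hcop.dvd_of_dvd_mul_right h), fun h => (pow_dvd_pow _ h).mul_right _⟩

theorem prod_pow_dvd_prod_pow_iff (hp : IsMonicIrreducibleFamily p) {f g : ι → ℕ} :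
    (∏ i, p i ^ f i) ∣ ∏ i, p i ^ g i ↔ f ≤ g := by
  refine ⟨fun h i => ?_, fun h => Dvd.intro _ (prod_pow_eq_mul_prod_pow_sub p h).symm⟩
  have hi : p i ^ f i ∣ ∏ j, p j ^ f j :=
    Finset.dvd_prod_of_mem (fun j => p j ^ f j) (Finset.mem_univ i)
  exact (hp.pow_dvd_prod_pow_iff i).mp (hi.trans h)

theorem prod_pow_injective (hp : IsMonicIrreducibleFamily p) :
    Function.Injective fun f : ι → ℕ => ∏ i, p i ^ f i := fun _ _ h =>
  le_antisymm (hp.prod_pow_dvd_prod_pow_iff.mp (dvd_of_eq h))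
    (hp.prod_pow_dvd_prod_pow_iff.mp (dvd_of_eq h.symm))

theorem prod_pow_eq_one_iff (hp : IsMonicIrreducibleFamily p) {f : ι → ℕ} :
    ∏ i, p i ^ f i = 1 ↔ f = 0 :=
  ⟨fun h => hp.prod_pow_injective (by simpa using h), fun h => by simp [h]⟩

theorem prod_pow_div_prod_pow (hp : IsMonicIrreducibleFamily p) {f g : ι → ℕ} (h : f ≤ g) :
    (∏ i, p i ^ g i) / ∏ i, p i ^ f i = ∏ i, p i ^ (g - f) i :=
  (EuclideanDomain.eq_div_of_mul_eq_right (hp.monic_prod_pow f).ne_zero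
    (prod_pow_eq_mul_prod_pow_sub p h).symm).symm

theorem isCoprime_prod_pow_iff (hp : IsMonicIrreducibleFamily p) {f g : ι → ℕ} :
    IsCoprime (∏ i, p i ^ f i) (∏ i, p i ^ g i) ↔ ∀ i, f i = 0 ∨ g i = 0 := by
  refine ⟨fun h i => ?_, fun h => ?_⟩
  · by_contra! hfg
    have hdvd {e : ι → ℕ} (he : e i ≠ 0) : p i ∣ ∏ j, p j ^ e j := by
      simpa using (hp.pow_dvd_prod_pow_iff i (k := 1)).mpr (Nat.one_le_iff_ne_zero.mpr he)
    exact (hp.irreducible i).not_isUnit (h.isUnit_of_dvd' (hdvd hfg.1) (hdvd hfg.2))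
  · refine IsCoprime.prod_left fun i _ => IsCoprime.prod_right fun j _ => ?_
    by_cases hij : i = j
    · subst hij
      rcases h i with h0 | h0 <;> simp [h0, isCoprime_one_left, isCoprime_one_right]
    · exact (hp.isCoprime hij).pow

end IsMonicIrreducibleFamily

theorem gcdU_eq_one_iff {S T : F4[X]} :
    gcdU S T = 1 ↔
      ∀ E : F4[X], E.Monic → IsUnitaryDivisor E S → IsUnitaryDivisor E T → E = 1 := by
  unfold gcdU
  split_ifs with h
  · obtain ⟨hD, hDS, hDT, hmax⟩ := h.choose_spec
    refine ⟨fun h1 E hE hES hET => ?_, fun H => H _ hD hDS hDT⟩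
    have := hmax E hE hES hET
    rw [h1, degree_one] at this
    exact hE.natDegree_eq_zero.mp (natDegree_eq_zero_iff_degree_le_zero.mpr this)
  · refine ⟨fun h0 => absurd h0 zero_ne_one, fun H => absurd ?_ h⟩
    have h1 {S : F4[X]} : IsUnitaryDivisor 1 S := ⟨one_dvd _, isCoprime_one_left⟩
    exact ⟨1, monic_one, h1, h1, fun E hE hES hET => by rw [H E hE hES hET]⟩

theorem isUnitaryDivisor_C_mul {u : F4} (hu : u ≠ 0) {E S : F4[X]} :
    IsUnitaryDivisor E (C u * S) ↔ IsUnitaryDivisor E S := by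
  unfold IsUnitaryDivisor
  rw [dvd_C_mul hu]
  refine and_congr_right fun hE => ?_
  rw [EuclideanDomain.mul_div_assoc _ hE, isCoprime_mul_unit_left_right (isUnit_C.mpr hu.isUnit)]

theorem gcdU_C_mul_right {u : F4} (hu : u ≠ 0) (D S : F4[X]) : gcdU D (C u * S) = gcdU D S := by
  simp only [gcdU, isUnitaryDivisor_C_mul hu]

theorem isBiunitaryDivisor_C_mul {u : F4} (hu : u ≠ 0) {D S : F4[X]} :
    IsBiunitaryDivisor D (C u * S) ↔ IsBiunitaryDivisor D S := by
  unfold IsBiunitaryDivisor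
  rw [dvd_C_mul hu]
  exact and_congr_right fun hD => by rw [EuclideanDomain.mul_div_assoc _ hD, gcdU_C_mul_right hu]

theorem sigmaBU_C_mul {u : F4} (hu : u ≠ 0) (S : F4[X]) : sigmaBU (C u * S) = sigmaBU S := by
  simp only [sigmaBU, isBiunitaryDivisor_C_mul hu]

def biunitaryExponents (a : ℕ) : Finset ℕ :=
  (Finset.range (a + 1)).filter fun i => i = 0 ∨ 2 * i ≠ a

theorem mem_biunitaryExponents {a i : ℕ} :
    i ∈ biunitaryExponents a ↔ i ≤ a ∧ (i = 0 ∨ 2 * i ≠ a) := by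
  simp [biunitaryExponents]

def sigmaBUPow {R : Type*} [Semiring R] (x : R) (a : ℕ) : R :=
  ∑ i ∈ biunitaryExponents a, x ^ i

namespace IsMonicIrreducibleFamily

variable {ι : Type*} [Fintype ι] {p : ι → F4[X]}

theorem isUnitaryDivisor_prod_pow_iff (hp : IsMonicIrreducibleFamily p) {f g : ι → ℕ} :
    IsUnitaryDivisor (∏ i, p i ^ f i) (∏ i, p i ^ g i) ↔ ∀ i, f i = 0 ∨ f i = g i := by
  unfold IsUnitaryDivisor
  rw [hp.prod_pow_dvd_prod_pow_iff]
  constructor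
  · rintro ⟨hle, hcop⟩ i
    rw [hp.prod_pow_div_prod_pow hle, hp.isCoprime_prod_pow_iff] at hcop
    have h₁ : f i ≤ g i := hle i
    have h₂ := hcop i
    rw [Pi.sub_apply] at h₂
    omega
  · intro h
    have hle : ∀ i, f i ≤ g i := fun i => by rcases h i with h0 | h0 <;> omega
    refine ⟨hle, ?_⟩
    rw [hp.prod_pow_div_prod_pow hle, hp.isCoprime_prod_pow_iff]
    intro i
    rcases h i with h | h <;> simp [h]

theorem gcdU_prod_pow_eq_one_iff (hp : IsMonicIrreducibleFamily p) {f g : ι → ℕ} :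
    gcdU (∏ i, p i ^ f i) (∏ i, p i ^ g i) = 1 ↔ ∀ i, f i = 0 ∨ f i ≠ g i := by
  rw [gcdU_eq_one_iff]
  constructor
  · intro H i
    by_contra! hi
    have hsingle {e : ι → ℕ} (he : e i = f i) :
        IsUnitaryDivisor (∏ j, p j ^ (Pi.single i (f i) : ι → ℕ) j) (∏ j, p j ^ e j) := by
      refine hp.isUnitaryDivisor_prod_pow_iff.mpr fun j => ?_
      by_cases hj : j = i
      · subst hj
        simp [he]
      · simp [hj]
    have := H _ (hp.monic_prod_pow _) (hsingle rfl) (hsingle hi.2.symm)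
    exact hi.1 (by simpa using congrFun (hp.prod_pow_eq_one_iff.mp this) i)
  · intro H E hE hEf hEg
    obtain ⟨e, rfl⟩ := hp.exists_eq_prod_pow_of_dvd hE hEf.1
    rw [hp.isUnitaryDivisor_prod_pow_iff] at hEf hEg
    refine hp.prod_pow_eq_one_iff.mpr (funext fun i => ?_)
    have := H i
    have := hEf i
    have := hEg i
    simp only [Pi.zero_apply]
    omega

theorem isBiunitaryDivisor_prod_pow_iff (hp : IsMonicIrreducibleFamily p) {f g : ι → ℕ} :
    IsBiunitaryDivisor (∏ i, p i ^ f i) (∏ i, p i ^ g i) ↔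
      ∀ i, f i ∈ biunitaryExponents (g i) := by
  simp only [IsBiunitaryDivisor, mem_biunitaryExponents, hp.prod_pow_dvd_prod_pow_iff]
  constructor
  · rintro ⟨hle, hgcd⟩ i
    rw [hp.prod_pow_div_prod_pow hle, hp.gcdU_prod_pow_eq_one_iff] at hgcd
    have h₁ : f i ≤ g i := hle i
    have h₂ := hgcd i
    rw [Pi.sub_apply] at h₂
    omega
  · intro h
    have hle : f ≤ g := fun i => (h i).1
    refine ⟨hle, ?_⟩
    rw [hp.prod_pow_div_prod_pow hle, hp.gcdU_prod_pow_eq_one_iff]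
    intro i
    have := h i
    simp only [Pi.sub_apply]
    omega

theorem sigmaBU_prod_pow (hp : IsMonicIrreducibleFamily p) (g : ι → ℕ) :
    sigmaBU (∏ i, p i ^ g i) = ∏ i, sigmaBUPow (p i) (g i) := by
  have hset : {D : F4[X] | D.Monic ∧ IsBiunitaryDivisor D (∏ i, p i ^ g i)} =
      ((Fintype.piFinset fun i => biunitaryExponents (g i)).image
        fun f => ∏ i, p i ^ f i : Finset F4[X]) := by
    ext D
    simp only [Set.mem_ofPred_eq, Finset.coe_image, Set.mem_image, Finset.mem_coe,
      Fintype.mem_piFinset]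
    constructor
    · rintro ⟨hD, hDg⟩
      obtain ⟨f, rfl⟩ := hp.exists_eq_prod_pow_of_dvd hD hDg.1
      exact ⟨f, hp.isBiunitaryDivisor_prod_pow_iff.mp hDg, rfl⟩
    · rintro ⟨f, hf, rfl⟩
      exact ⟨hp.monic_prod_pow f, hp.isBiunitaryDivisor_prod_pow_iff.mpr hf⟩
  rw [sigmaBU, hset, finsum_mem_coe_finset,
    Finset.sum_image fun f _ g _ h => hp.prod_pow_injective h]
  simp only [sigmaBUPow, Finset.prod_univ_sum]

end IsMonicIrreducibleFamily

section CharTwo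

variable {R : Type*} [CommRing R]

theorem not_dvd_sigmaBUPow {x : R} (hx : ¬IsUnit x) (a : ℕ) : ¬x ∣ sigmaBUPow x a := by
  intro hdvd
  have h0 : 0 ∈ biunitaryExponents a := mem_biunitaryExponents.mpr ⟨a.zero_le, Or.inl rfl⟩
  rw [sigmaBUPow, ← Finset.add_sum_erase _ _ h0, pow_zero] at hdvd
  have hrest : x ∣ ∑ i ∈ (biunitaryExponents a).erase 0, x ^ i :=
    Finset.dvd_sum fun i hi => dvd_pow_self x (Finset.ne_of_mem_erase hi)
  exact hx (isUnit_of_dvd_one ((dvd_add_left hrest).mp hdvd))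

theorem geom_sum_mul_add_one [CharP R 2] (x : R) (n : ℕ) :
    (∑ i ∈ Finset.range n, x ^ i) * (x + 1) = x ^ n + 1 := by
  simpa only [CharTwo.sub_eq_add] using geom_sum_mul x n

theorem add_one_dvd_pow_add_one [CharP R 2] (x : R) (n : ℕ) : x + 1 ∣ x ^ n + 1 :=
  Dvd.intro_left _ (geom_sum_mul_add_one x n)

theorem sigmaBUPow_mul_add_one_of_odd [CharP R 2] (x : R) {a : ℕ} (ha : Odd a) :
    sigmaBUPow x a * (x + 1) = x ^ (a + 1) + 1 := by
  have : biunitaryExponents a = Finset.range (a + 1) :=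
    Finset.filter_true_of_mem fun i _ => Or.inr (by obtain ⟨m, rfl⟩ := ha; omega)
  rw [sigmaBUPow, this, geom_sum_mul_add_one]

theorem sigmaBUPow_two_mul_mul_add_one [CharP R 2] (x : R) {h : ℕ} (hh : h ≠ 0) :
    sigmaBUPow x (2 * h) * (x + 1) = (x ^ (h + 1) + 1) * (x ^ h + 1) := by
  have hmem : h ∈ Finset.range (2 * h + 1) := Finset.mem_range.mpr (by omega)
  have : biunitaryExponents (2 * h) = (Finset.range (2 * h + 1)).erase h := by
    ext i
    simp only [biunitaryExponents, Finset.mem_filter, Finset.mem_erase, Finset.mem_range]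
    omega
  have hsum := eq_sub_of_add_eq (Finset.sum_erase_add _ (fun i => x ^ i) hmem)
  rw [sigmaBUPow, this, hsum, sub_mul, geom_sum_mul_add_one, CharTwo.sub_eq_add]
  ring

theorem add_one_dvd_sigmaBUPow [IsDomain R] [CharP R 2] {x : R} (hx : x + 1 ≠ 0) {a : ℕ}
    (ha : a ≠ 0) : x + 1 ∣ sigmaBUPow x a := by
  refine (mul_dvd_mul_iff_right hx).mp ?_
  obtain ⟨h, rfl | rfl⟩ := Nat.even_or_odd' a
  · rw [sigmaBUPow_two_mul_mul_add_one x (by omega)]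
    exact mul_dvd_mul (add_one_dvd_pow_add_one x _) (add_one_dvd_pow_add_one x _)
  · have hsq : x ^ (2 * h + 1 + 1) + 1 = (x ^ (h + 1) + 1) * (x ^ (h + 1) + 1) := by
      linear_combination (-x ^ (h + 1)) * CharTwo.two_eq_zero (R := R)
    rw [sigmaBUPow_mul_add_one_of_odd x (odd_two_mul_add_one h), hsq]
    exact mul_dvd_mul (add_one_dvd_pow_add_one x _) (add_one_dvd_pow_add_one x _)

end CharTwo

theorem exists_irreducible_dvd_comp_ne {K : Type*} [Field K] [CharP K 2] {P h : K[X]}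
    (hP : P.Monic) (hP0 : P.natDegree ≠ 0) {n : ℕ} (hn : Odd n) (hh : h.Monic) (hhi : Irreducible h)
    (hdvd : h ∣ ∑ i ∈ Finset.range n, X ^ i) :
    ∃ π : K[X], π.Monic ∧ Irreducible π ∧ π ∣ h.comp P ∧ π ≠ P + 1 := by
  by_contra! H
  -- otherwise `h.comp P` is a power of `P + 1`, making `1` a root of `1 + X + ⋯ + X ^ (n - 1)`
  obtain ⟨k, hk⟩ := eq_pow_of_forall_irreducible_dvd_eq (hh.comp hP hP0) H
  have hX : h = (X + 1) ^ k := eq_of_comp_eq_comp hP0 (by simp [hk])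
  have hk0 : k ≠ 0 := by
    rintro rfl
    exact hhi.not_isUnit (by simp [hX])
  have hroot : (X - C 1 : K[X]) ∣ ∑ i ∈ Finset.range n, X ^ i := by
    rw [C_1, CharTwo.sub_eq_add]
    exact (dvd_pow_self _ hk0).trans (hX ▸ hdvd)
  have := dvd_iff_isRoot.mp hroot
  simp only [IsRoot, eval_finsetSum, eval_pow, eval_X, one_pow, Finset.sum_const,
    Finset.card_range, nsmul_eq_mul, mul_one] at this
  rw [natCast_eq_one_of_odd_of_two_eq_zero hn CharTwo.two_eq_zero] at this
  exact one_ne_zero this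

section Mersenne

open UniqueFactorizationMonoid

-- Each irreducible factor has degree `orderOf 4` in `(ZMod n)ˣ`, which divides `φ n / 2`.
theorem one_lt_card_normalizedFactors_cyclotomic {n : ℕ} (hn : Odd n) (h3 : 3 ≤ n) :
    1 < (normalizedFactors (cyclotomic n F4)).toFinset.card := by
  have : Fintype F4 := Fintype.ofFinite F4
  have hcard : Fintype.card F4 = 2 ^ 2 := by
    rw [Fintype.card_eq_nat_card, GaloisField.card 2 2 (by norm_num)]
  have hcop : Nat.Coprime 2 n := Nat.coprime_two_left.mpr hn
  rw [normalizedFactors_cyclotomic_card hcard hcop]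
  set v := ZMod.unitOfCoprime 2 hcop
  have hv : ZMod.unitOfCoprime (2 ^ 2) (hcop.pow_left 2) = v ^ 2 := Units.ext (by norm_num [v])
  obtain ⟨t, ht⟩ := Nat.totient_even (by omega : 2 < n)
  have ht0 : 0 < t := by have := Nat.totient_pos.mpr (by omega : 0 < n); omega
  have hord : orderOf (v ^ 2) ≤ t := Nat.le_of_dvd ht0 <| orderOf_dvd_of_pow_eq_one <| by
    rw [← pow_mul, two_mul, ← ht, ZMod.pow_totient]
  rw [hv, ← Nat.succ_le_iff, Nat.le_div_iff_mul_le (orderOf_pos _)]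
  omega

theorem exists_irreducible_dvd_pow_add_one {P : F4[X]} (hP : P.Monic) (hP0 : P.natDegree ≠ 0)
    {n : ℕ} (hn : Odd n) (h3 : 3 ≤ n) (R : F4[X]) :
    ∃ π : F4[X], π.Monic ∧ Irreducible π ∧ π ∣ P ^ n + 1 ∧ π ≠ P + 1 ∧ π ≠ R := by
  obtain ⟨h₁, hh₁, h₂, hh₂, hne⟩ :=
    Finset.one_lt_card.mp (one_lt_card_normalizedFactors_cyclotomic hn h3)
  rw [Multiset.mem_toFinset] at hh₁ hh₂
  have hfac {h : F4[X]} (hh : h ∈ normalizedFactors (cyclotomic n F4)) :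
      h.Monic ∧ Irreducible h ∧ h ∣ ∑ i ∈ Finset.range n, X ^ i ∧ h.comp P ∣ P ^ n + 1 := by
    obtain ⟨hhi, hhm, hhd⟩ :=
      (Polynomial.mem_normalizedFactors_iff (cyclotomic_ne_zero n F4)).mp hh
    have hgeom := hhd.trans (cyclotomic_dvd_geom_sum_of_dvd F4 dvd_rfl (by omega))
    refine ⟨hhm, hhi, hgeom, (map_dvd (compRingHom P) hgeom).trans ?_⟩
    rw [← geom_sum_mul_add_one]
    simp
  obtain ⟨hm₁, hi₁, hg₁, hd₁⟩ := hfac hh₁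
  obtain ⟨hm₂, hi₂, hg₂, hd₂⟩ := hfac hh₂
  have hcop : IsCoprime (h₁.comp P) (h₂.comp P) :=
    ((hi₁.coprime_iff_not_dvd).mpr fun hd =>
      hne (eq_of_monic_irreducible_of_dvd hm₁ hi₁ hm₂ hi₂ hd)).map (compRingHom P)
  obtain ⟨π₁, hπ₁, hπ₁i, hπ₁d, hπ₁P⟩ := exists_irreducible_dvd_comp_ne hP hP0 hn hm₁ hi₁ hg₁
  obtain ⟨π₂, hπ₂, hπ₂i, hπ₂d, hπ₂P⟩ := exists_irreducible_dvd_comp_ne hP hP0 hn hm₂ hi₂ hg₂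
  by_cases hπ₁R : π₁ = R
  · refine ⟨π₂, hπ₂, hπ₂i, hπ₂d.trans hd₂, hπ₂P, ?_⟩
    rintro rfl
    exact hπ₂i.not_isUnit (hcop.isUnit_of_dvd' (hπ₁R ▸ hπ₁d) hπ₂d)
  · exact ⟨π₁, hπ₁, hπ₁i, hπ₁d.trans hd₁, hπ₁P, hπ₁R⟩

theorem not_dvd_pow_add_one {P R : F4[X]} (hP : P.Monic) (hP0 : P.natDegree ≠ 0)
    (hP1 : Irreducible (P + 1)) (hR : R.Monic) (hRi : Irreducible R) (hRP : R ≠ P + 1) {n : ℕ}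
    (hn : n ≠ 0)
    (hfac : ∀ π : F4[X], π.Monic → Irreducible π → π ∣ P ^ n + 1 → π = P + 1 ∨ π = R) :
    ¬R ∣ P ^ n + 1 := by
  induction n using Nat.strong_induction_on with
  | _ n ih =>
  obtain ⟨m, rfl | rfl⟩ := Nat.even_or_odd' n
  · have hsq : P ^ (2 * m) + 1 = (P ^ m + 1) * (P ^ m + 1) := by
      linear_combination (-P ^ m) * CharTwo.two_eq_zero (R := F4[X])
    rw [hsq] at hfac ⊢
    intro hRn
    refine ih m (by omega) (by omega) (fun π hπ hπi hπd => hfac π hπ hπi (hπd.mul_right _)) ?_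
    exact (hRi.prime.dvd_mul.mp hRn).elim id id
  · rcases Nat.eq_zero_or_pos m with rfl | hm
    · rw [mul_zero, zero_add, pow_one]
      exact fun hRd => hRP (eq_of_monic_irreducible_of_dvd hR hRi (monic_add_one hP hP0) hP1 hRd)
    · obtain ⟨π, hπ, hπi, hπd, hπP, hπR⟩ :=
        exists_irreducible_dvd_pow_add_one hP hP0 (odd_two_mul_add_one m) (by omega) R
      exact absurd (hfac π hπ hπi hπd) (not_or.mpr ⟨hπP, hπR⟩)

theorem not_dvd_sigmaBUPow_of_forall_irreducible_dvd {P R : F4[X]} (hP : P.Monic)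
    (hP0 : P.natDegree ≠ 0) (hP1 : Irreducible (P + 1)) (hR : R.Monic) (hRi : Irreducible R)
    (hRP : R ≠ P + 1) {a : ℕ} (ha : a ≠ 0)
    (hfac : ∀ π : F4[X], π.Monic → Irreducible π → π ∣ sigmaBUPow P a →
      π = P ∨ π = P + 1 ∨ π = R) :
    ¬R ∣ sigmaBUPow P a := by
  have hfac' (π : F4[X]) (hπ : π.Monic) (hπi : Irreducible π)
      (hπd : π ∣ sigmaBUPow P a * (P + 1)) : π = P + 1 ∨ π = R := by
    rcases hπi.prime.dvd_mul.mp hπd with hσ | hP1d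
    · rcases hfac π hπ hπi hσ with rfl | h | h
      · exact absurd hσ (not_dvd_sigmaBUPow (not_isUnit_of_natDegree_pos _ (by omega)) a)
      · exact Or.inl h
      · exact Or.inr h
    · exact Or.inl (eq_of_monic_irreducible_of_dvd hπ hπi (monic_add_one hP hP0) hP1 hP1d)
  intro hRσ
  replace hRσ := hRσ.mul_right (P + 1)
  have hmers := @not_dvd_pow_add_one P R hP hP0 hP1 hR hRi hRP
  obtain ⟨h, rfl | rfl⟩ := Nat.even_or_odd' a
  · rw [sigmaBUPow_two_mul_mul_add_one P (by omega)] at hfac' hRσ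
    rcases hRi.prime.dvd_mul.mp hRσ with hd | hd
    · exact hmers (by omega) (fun π hπ hπi hπd => hfac' π hπ hπi (hπd.mul_right _)) hd
    · exact hmers (by omega) (fun π hπ hπi hπd => hfac' π hπ hπi (hπd.mul_left _)) hd
  · rw [sigmaBUPow_mul_add_one_of_odd P (odd_two_mul_add_one h)] at hfac' hRσ
    exact hmers (by omega) hfac' hRσ

end Mersenne

theorem exists_ne_ne_of_card_eq_three {ι : Type*} [Fintype ι] (h : Fintype.card ι = 3) {i j : ι}
    (hij : i ≠ j) : ∃ k, k ≠ i ∧ k ≠ j ∧ ∀ l, l = i ∨ l = j ∨ l = k := by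
  obtain ⟨k, -, hk⟩ := Finset.exists_mem_notMem_of_card_lt_card (s := {i, j})
    (t := Finset.univ) (by rw [Finset.card_univ, h, Finset.card_pair hij]; omega)
  simp only [Finset.mem_insert, Finset.mem_singleton, not_or] at hk
  have huniv := Finset.eq_univ_of_card ({i, j, k} : Finset ι) (by
    rw [h, Finset.card_insert_of_notMem (by simp [hij, Ne.symm hk.1]),
      Finset.card_pair (Ne.symm hk.2)])
  refine ⟨k, hk.1, hk.2, fun l => ?_⟩
  have hl := Finset.mem_univ l
  rw [← huniv] at hl
  simpa using hl

-- `Set.ncard` is `0` on infinite sets.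
theorem omegaCount_zero : omegaCount 0 = 0 :=
  Set.Infinite.ncard (by simpa only [dvd_zero, and_true] using infinite_setOf_monic_irreducible)

theorem not_isBUPerfect_C_mul_prod_pow {ι : Type*} [Fintype ι] {p : ι → F4[X]}
    (hp : IsMonicIrreducibleFamily p) (hι : Fintype.card ι = 3) {a : ι → ℕ} (ha : ∀ i, a i ≠ 0)
    {u : F4} (hu : u ≠ 0) : ¬IsBUPerfect (C u * ∏ i, p i ^ a i) := by
  intro hperf
  rw [IsBUPerfect, sigmaBU_C_mul hu, hp.sigmaBU_prod_pow] at hperf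
  have hfac (l : ι) (π : F4[X]) (hπ : π.Monic) (hπi : Irreducible π)
      (hπd : π ∣ sigmaBUPow (p l) (a l)) : ∃ j, π = p j := by
    refine hp.exists_eq_of_irreducible_dvd hπ hπi (f := a) ?_
    rw [← dvd_C_mul hu, ← hperf]
    exact hπd.trans (Finset.dvd_prod_of_mem _ (Finset.mem_univ l))
  have : Nonempty ι := Fintype.card_pos_iff.mp (by omega)
  have hP0 (l : ι) : (p l).natDegree ≠ 0 := (hp.irreducible l).natDegree_pos.ne'
  obtain ⟨i, j, hj⟩ := hp.exists_eq_add_one fun l π hπ hπi hπd => hfac l π hπ hπi <| hπd.trans <|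
    add_one_dvd_sigmaBUPow (monic_add_one (hp.monic l) (hP0 l)).ne_zero (ha l)
  have hji : p j + 1 = p i := by rw [hj, add_assoc, CharTwo.add_self_eq_zero, add_zero]
  have hij : i ≠ j := by
    rintro rfl
    exact one_ne_zero (by linear_combination -hj)
  obtain ⟨k, hki, hkj, hall⟩ := exists_ne_ne_of_card_eq_three hι hij
  have hfac3 (l : ι) (π : F4[X]) (hπ : π.Monic) (hπi : Irreducible π)
      (hπd : π ∣ sigmaBUPow (p l) (a l)) : π = p i ∨ π = p j ∨ π = p k := by
    obtain ⟨m, rfl⟩ := hfac l π hπ hπi hπd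
    rcases hall m with h | h | h <;> simp [h]
  have hkdvd : p k ∣ ∏ l, sigmaBUPow (p l) (a l) := by
    rw [hperf, dvd_C_mul hu]
    exact (dvd_pow_self _ (ha k)).trans (Finset.dvd_prod_of_mem _ (Finset.mem_univ k))
  obtain ⟨l, -, hl⟩ := ((hp.irreducible k).prime.dvd_finsetProd_iff _).mp hkdvd
  rcases hall l with h | h | h <;> rw [h] at hl
  · refine not_dvd_sigmaBUPow_of_forall_irreducible_dvd (hp.monic i) (hP0 i)
      (hj ▸ hp.irreducible j) (hp.monic k) (hp.irreducible k) (hj ▸ hp.injective.ne hkj) (ha i)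
      ?_ hl
    rw [← hj]
    exact hfac3 i
  · refine not_dvd_sigmaBUPow_of_forall_irreducible_dvd (hp.monic j) (hP0 j)
      (hji ▸ hp.irreducible i) (hp.monic k) (hp.irreducible k) (hji ▸ hp.injective.ne hki) (ha j)
      ?_ hl
    rw [hji]
    exact fun π hπ hπi hπd => or_left_comm.mp (hfac3 j π hπ hπi hπd)
  · exact not_dvd_sigmaBUPow (hp.irreducible k).not_isUnit _ hl

theorem stmt14 : ¬ ∃ A : F4[X], IsBUPerfect A ∧ omegaCount A = 3 := by
  rintro ⟨A, hperf, hω⟩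
  have hA : A ≠ 0 := by
    rintro rfl
    rw [omegaCount_zero] at hω
    omega
  set S := {P : F4[X] | P.Monic ∧ Irreducible P ∧ P ∣ A}
  have hS : S.ncard = 3 := hω
  have := (Set.finite_of_ncard_ne_zero (by omega : S.ncard ≠ 0)).fintype
  have hp : IsMonicIrreducibleFamily ((↑) : S → F4[X]) :=
    ⟨fun P => P.2.1, fun P => P.2.2.1, Subtype.val_injective⟩
  obtain ⟨a, ha⟩ := exists_eq_C_mul_prod_pow (p := ((↑) : S → F4[X])) hA
    fun π hπ hπi hπA => ⟨⟨π, hπ, hπi, hπA⟩, rfl⟩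
  rw [ha] at hperf
  refine not_isBUPerfect_C_mul_prod_pow hp ?_ (fun P => ?_) (leadingCoeff_ne_zero.mpr hA) hperf
  · rwa [Fintype.card_eq_nat_card, Nat.card_coe_set_eq]
  · rw [← Nat.one_le_iff_ne_zero, ← hp.pow_dvd_prod_pow_iff, pow_one,
      ← dvd_C_mul (leadingCoeff_ne_zero.mpr hA), ← ha]
    exact P.2.2.2
end
end
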